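/- arXiv:math/0201086 — 5 statements merged into one kernel-verified Lean document; each statement's English description precedes it below -/
import Mathlib

section
/- Let Λ ∈ L^∞(ℝ) and suppose there is a constant C such that for every finitely supported sequence φ : ℤ → ℂ the function ξ ↦ Σ_{n∈ℤ} φ(n) Λ(ξ−n) has L^∞ norm at most C·sup_n |φ(n)|. Then ess sup_ξ Σ_{n∈ℤ} |Λ(ξ+n)| ≤ C. -/
open MeasureTheory Complex Real FourierTransform
open scoped ENNReal NNReal

noncomputable section

/-!
Testing the hypothesis against `φ(n) = exp(-i arg Λ(ξ - n))` on a finite set `s` gives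
`Σ_{n ∈ s} |Λ(ξ - n)| ≤ C`, except that this `φ` depends on `ξ` while each bound only holds
off a `φ`-dependent null set. The bound is a closed condition on the coefficients, and the
coefficient space `ℤ → closedBall 0 1` is separable, so countably many `φ` suffice and a single
null set serves every `φ` and every `s` at once.
-/

theorem MeasureTheory.ae_forall_of_isClosed_of_dense {X α : Type*} [TopologicalSpace X]
    [TopologicalSpace.SeparableSpace X] [MeasurableSpace α] {μ : Measure α} {p : X → α → Prop}
    (hp : ∀ a, IsClosed {x | p x a}) (h : ∀ x, ∀ᵐ a ∂μ, p x a) : ∀ᵐ a ∂μ, ∀ x, p x a := by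
  obtain ⟨D, hD, hDense⟩ := TopologicalSpace.exists_countable_dense X
  filter_upwards [(ae_ball_iff hD).2 fun x _ => h x] with a ha x
  exact (hp a).closure_subset_iff.2 ha (hDense x)

theorem Complex.exp_neg_arg_mul_I_mul_self (z : ℂ) : exp (-(arg z * I)) * z = ‖z‖ := by
  calc exp (-(arg z * I)) * z = exp (-(arg z * I)) * (‖z‖ * exp (arg z * I)) := by
        rw [norm_mul_exp_arg_mul_I]
    _ = ‖z‖ := by rw [mul_left_comm, ← exp_add, neg_add_cancel, exp_zero, mul_one]

theorem Finset.sum_enorm_le_of_forall_enorm_sum_le {ι : Type*} (s : Finset ι) (z : ι → ℂ)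
    {c : ℝ≥0∞} (h : ∀ u : ι → Metric.closedBall (0 : ℂ) 1, ‖∑ i ∈ s, (u i : ℂ) * z i‖ₑ ≤ c) :
    ∑ i ∈ s, ‖z i‖ₑ ≤ c := by
  let u : ι → Metric.closedBall (0 : ℂ) 1 := fun i =>
    ⟨exp (-(arg (z i) * I)), by simp [norm_exp]⟩
  calc ∑ i ∈ s, ‖z i‖ₑ = ‖((∑ i ∈ s, ‖z i‖ : ℝ) : ℂ)‖ₑ := by
        rw [← ofReal_norm, Complex.norm_real, Real.norm_of_nonneg (by positivity),
          ENNReal.ofReal_sum_of_nonneg fun _ _ => norm_nonneg _]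
        simp only [ofReal_norm]
    _ = ‖∑ i ∈ s, (u i : ℂ) * z i‖ₑ := by
        push_cast
        simp only [u, exp_neg_arg_mul_I_mul_self]
    _ ≤ c := h u

theorem ae_enorm_sum_le_of_multiplier_bound (Λ : ℝ → ℂ) (C : ℝ)
    (h : ∀ φ : ℤ → ℂ, (Function.support φ).Finite → ∀ B : ℝ, (∀ n : ℤ, ‖φ n‖ ≤ B) →
      eLpNorm (fun ξ : ℝ => ∑' n : ℤ, φ n * Λ (ξ - (n : ℝ))) ⊤ volume ≤
        ENNReal.ofReal (C * B))
    (s : Finset ℤ) (u : ℤ → Metric.closedBall (0 : ℂ) 1) :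
    ∀ᵐ ξ : ℝ, ‖∑ n ∈ s, (u n : ℂ) * Λ (ξ - n)‖ₑ ≤ ENNReal.ofReal C := by
  let φ : ℤ → ℂ := fun n => if n ∈ s then (u n : ℂ) else 0
  have hφ : (Function.support φ).Finite :=
    s.finite_toSet.subset fun n hn => by by_contra hns; exact hn (if_neg hns)
  have hφ1 : ∀ n, ‖φ n‖ ≤ 1 := fun n => by
    by_cases hn : n ∈ s
    · simpa only [φ, if_pos hn] using mem_closedBall_zero_iff.1 (u n).2
    · simp [φ, hn]
  have hsum : ∀ ξ : ℝ, ∑' n : ℤ, φ n * Λ (ξ - n) = ∑ n ∈ s, (u n : ℂ) * Λ (ξ - n) := fun ξ => by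
    rw [tsum_eq_sum (s := s) fun n hn => by simp [φ, hn]]
    exact Finset.sum_congr rfl fun n hn => by simp [φ, hn]
  have hbound := h φ hφ 1 hφ1
  simp only [hsum, mul_one, eLpNorm_exponent_top] at hbound
  filter_upwards [enorm_ae_le_eLpNormEssSup (fun ξ : ℝ => ∑ n ∈ s, (u n : ℂ) * Λ (ξ - n)) volume]
    with ξ hξ using hξ.trans hbound

theorem stmt1_general (Λ : ℝ → ℂ) (C : ℝ)
    (h : ∀ φ : ℤ → ℂ, (Function.support φ).Finite → ∀ B : ℝ, (∀ n : ℤ, ‖φ n‖ ≤ B) →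
      eLpNorm (fun ξ : ℝ => ∑' n : ℤ, φ n * Λ (ξ - (n : ℝ))) ⊤ volume ≤
        ENNReal.ofReal (C * B)) :
    essSup (fun ξ : ℝ => ∑' n : ℤ, (‖Λ (ξ + (n : ℝ))‖₊ : ℝ≥0∞)) volume ≤
      ENNReal.ofReal C := by
  have hae : ∀ᵐ ξ : ℝ, ∀ (s : Finset ℤ) (u : ℤ → Metric.closedBall (0 : ℂ) 1),
      ‖∑ n ∈ s, (u n : ℂ) * Λ (ξ - n)‖ₑ ≤ ENNReal.ofReal C := by
    refine ae_all_iff.2 fun s => ae_forall_of_isClosed_of_dense (fun ξ => ?_)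
      (ae_enorm_sum_le_of_multiplier_bound Λ C h s)
    exact isClosed_le (by fun_prop) continuous_const
  refine essSup_le_of_ae_le _ ?_
  filter_upwards [hae] with ξ hξ
  rw [← (Equiv.neg ℤ).tsum_eq]
  simp only [Equiv.neg_apply, Int.cast_neg, ← sub_eq_add_neg]
  exact ENNReal.summable.tsum_le_of_sum_le fun s => s.sum_enorm_le_of_forall_enorm_sum_le _ (hξ s)

/-- If `Λ ∈ L^∞(ℝ)` and there is `C` such that for every finitely supported `φ : ℤ → ℂ`
the function `ξ ↦ Σ_n φ(n)Λ(ξ-n)` has `L^∞` norm at most `C · sup_n |φ(n)|`, then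
`ess sup_ξ Σ_n |Λ(ξ+n)| ≤ C`. -/
theorem stmt1 (Λ : ℝ → ℂ) (hΛ : MemLp Λ ⊤ volume) (C : ℝ) (hC : 0 ≤ C)
    (h : ∀ φ : ℤ → ℂ, (Function.support φ).Finite → ∀ B : ℝ, (∀ n : ℤ, ‖φ n‖ ≤ B) →
      eLpNorm (fun ξ : ℝ => ∑' n : ℤ, φ n * Λ (ξ - (n : ℝ))) ⊤ volume ≤
        ENNReal.ofReal (C * B)) :
    essSup (fun ξ : ℝ => ∑' n : ℤ, (‖Λ (ξ + (n : ℝ))‖₊ : ℝ≥0∞)) volume ≤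
      ENNReal.ofReal C :=
  stmt1_general Λ C h

end
end

section
/- Let F ∈ L^1(ℝ) satisfy δ_F := ess sup_x Σ_{n∈ℤ} |F(x+n)| < ∞, and let P(x) = Σ_{|n|≤N} φ(n) e^{2πinx} be a trigonometric polynomial with 1-periodic extension P^# on ℝ. Then F·P^# ∈ L^1(ℝ), its Fourier transform equals ξ ↦ Σ_n φ(n) F̂(ξ−n), and ‖F·P^#‖_{L^1(ℝ)} ≤ δ_F · ‖P‖_{L^1([0,1))}. -/
/-!
Cutting `ℝ` into the translates `(n, n + 1]` and using the 1-periodicity of `P`,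
`∫ |F P| = ∫₀¹ (∑ₙ |F (x + n)|) |P x| dx ≤ δ ∫₀¹ |P|`. The Fourier formula is linearity together
with the modulation rule: multiplying by `e^{2πinx}` shifts the Fourier transform by `n`.
-/

open MeasureTheory Complex Real FourierTransform Set
open scoped ENNReal NNReal

noncomputable section

section Fourier

variable {E : Type*} [NormedAddCommGroup E] [NormedSpace ℂ E]

theorem Real.fourier_fourierChar_smul (f : ℝ → E) (a w : ℝ) :
    𝓕 (fun v ↦ 𝐞 (a * v) • f v) w = 𝓕 f (w - a) := by
  simp only [fourier_real_eq, smul_smul, ← AddChar.map_add_eq_mul]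
  congr 1 with v
  ring_nf

theorem Real.fourier_const_smul (c : ℂ) (f : ℝ → E) (w : ℝ) :
    𝓕 (fun v ↦ c • f v) w = c • 𝓕 f w :=
  congrFun (VectorFourier.fourierIntegral_const_smul _ _ _ f c) w

theorem Real.fourier_finset_sum {V : Type*} [NormedAddCommGroup V] [InnerProductSpace ℝ V]
    [MeasurableSpace V] [BorelSpace V] [FiniteDimensional ℝ V] {ι : Type*} (s : Finset ι)
    (f : ι → V → E) (hf : ∀ i ∈ s, Integrable (f i)) (w : V) :
    𝓕 (fun v ↦ ∑ i ∈ s, f i v) w = ∑ i ∈ s, 𝓕 (f i) w := by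
  simp only [fourier_eq, Finset.smul_sum]
  exact integral_finsetSum s fun i hi ↦ (Real.fourierIntegral_convergent_iff w).2 (hf i hi)

end Fourier

theorem Real.fourierChar_intCast (n : ℤ) : 𝐞 n = 1 := by
  rw [fourierChar_apply', Circle.exp_two_pi_mul_int]

def trigPoly (s : Finset ℤ) (c : ℤ → ℂ) (x : ℝ) : ℂ := ∑ n ∈ s, c n * 𝐞 (n * x)

section TrigPoly

variable (s : Finset ℤ) (c : ℤ → ℂ)

theorem continuous_trigPoly : Continuous (trigPoly s c) := by
  unfold trigPoly
  fun_prop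

theorem periodic_trigPoly : Function.Periodic (trigPoly s c) 1 := by
  intro x
  simp only [trigPoly, mul_add, mul_one, AddChar.map_add_eq_mul, Real.fourierChar_intCast]

theorem norm_trigPoly_le (x : ℝ) : ‖trigPoly s c x‖ ≤ ∑ n ∈ s, ‖c n‖ :=
  (norm_sum_le _ _).trans_eq (by simp only [norm_mul, Circle.norm_coe, mul_one])

theorem MeasureTheory.Integrable.mul_trigPoly {F : ℝ → ℂ} (hF : Integrable F) :
    Integrable (fun x ↦ F x * trigPoly s c x) :=
  hF.mul_bdd (continuous_trigPoly s c).aestronglyMeasurable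
    (.of_forall (norm_trigPoly_le s c))

theorem fourier_mul_trigPoly {F : ℝ → ℂ} (hF : Integrable F) (ξ : ℝ) :
    𝓕 (fun x ↦ F x * trigPoly s c x) ξ = ∑ n ∈ s, c n * 𝓕 F (ξ - n) := by
  have hterm (n : ℤ) : Integrable fun x ↦ c n • 𝐞 (n * x) • F x := by
    have := (hF.bdd_mul (c := 1) (f := fun x ↦ (𝐞 (n * x) : ℂ)) (by fun_prop)
      (.of_forall fun x ↦ (Circle.norm_coe _).le)).const_mul (c n)
    simpa only [Circle.smul_def, smul_eq_mul] using this
  have hsum : (fun x ↦ F x * trigPoly s c x) = fun x ↦ ∑ n ∈ s, c n • 𝐞 (n * x) • F x := by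
    ext x
    simp only [trigPoly, Finset.mul_sum, Circle.smul_def, smul_eq_mul]
    exact Finset.sum_congr rfl fun n _ ↦ by ring
  rw [hsum, Real.fourier_finset_sum s _ fun n _ ↦ hterm n]
  refine Finset.sum_congr rfl fun n _ ↦ ?_
  rw [Real.fourier_const_smul, Real.fourier_fourierChar_smul, smul_eq_mul]

end TrigPoly

theorem lintegral_eq_tsum_setLIntegral_Ioc_comp_add_int (f : ℝ → ℝ≥0∞) :
    ∫⁻ x, f x = ∑' n : ℤ, ∫⁻ x in Ioc 0 1, f (x + n) := by
  rw [← setLIntegral_univ, ← iUnion_Ioc_add_intCast (0 : ℝ),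
    lintegral_iUnion (fun _ ↦ measurableSet_Ioc) (pairwise_disjoint_Ioc_add_intCast 0)]
  refine tsum_congr fun n ↦ ?_
  rw [← (measurePreserving_add_right volume (n : ℝ)).setLIntegral_comp_preimage_emb
    (measurableEmbedding_addRight _), preimage_add_const_Ioc]
  simp

theorem lintegral_mul_eq_setLIntegral_Ioc_tsum_mul {f g : ℝ → ℝ≥0∞} (hf : AEMeasurable f)
    (hg : AEMeasurable g) (hper : Function.Periodic g 1) :
    ∫⁻ x, f x * g x = ∫⁻ x in Ioc 0 1, (∑' n : ℤ, f (x + n)) * g x := by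
  have hshift (n : ℤ) : AEMeasurable (fun x ↦ f (x + n)) :=
    hf.comp_quasiMeasurePreserving (measurePreserving_add_right volume _).quasiMeasurePreserving
  have hg_int (n : ℤ) (x : ℝ) : g (x + n) = g x := by simpa using hper.int_mul n x
  simp_rw [lintegral_eq_tsum_setLIntegral_Ioc_comp_add_int (fun x ↦ f x * g x), hg_int,
    ← ENNReal.tsum_mul_right]
  exact (lintegral_tsum fun n ↦ ((hshift n).mul hg).restrict).symm

theorem integral_norm_mul_norm_le_of_periodic {E F : Type*} [NormedAddCommGroup E]
    [NormedAddCommGroup F] {f : ℝ → E} {g : ℝ → F} {δ : ℝ} (hf : AEStronglyMeasurable f)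
    (hg : AEStronglyMeasurable g) (hper : Function.Periodic g 1)
    (hgi : IntegrableOn g (Ioc 0 1))
    (hsum : ∀ᵐ x, Summable fun n : ℤ ↦ ‖f (x + n)‖)
    (hδ : ∀ᵐ x, ∑' n : ℤ, ‖f (x + n)‖ ≤ δ) :
    ∫ x, ‖f x‖ * ‖g x‖ ≤ δ * ∫ x in (0 : ℝ)..1, ‖g x‖ := by
  have hδ0 : 0 ≤ δ := by
    obtain ⟨x, hx⟩ := hδ.exists
    exact (tsum_nonneg fun n ↦ norm_nonneg _).trans hx
  have hbound : ∀ᵐ x, ∑' n : ℤ, ‖f (x + n)‖ₑ ≤ ENNReal.ofReal δ := by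
    filter_upwards [hsum, hδ] with x hxs hxδ
    simp_rw [← ofReal_norm]
    rw [← ENNReal.ofReal_tsum_of_nonneg (fun n ↦ norm_nonneg _) hxs]
    exact ENNReal.ofReal_le_ofReal hxδ
  have hlint : ∫⁻ x, ‖f x‖ₑ * ‖g x‖ₑ ≤ ENNReal.ofReal δ * ∫⁻ x in Ioc 0 1, ‖g x‖ₑ := by
    rw [lintegral_mul_eq_setLIntegral_Ioc_tsum_mul hf.enorm hg.enorm (fun x ↦ by rw [hper x]),
      ← lintegral_const_mul' _ _ ENNReal.ofReal_ne_top]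
    exact lintegral_mono_ae <| (ae_restrict_of_ae hbound).mono fun x hx ↦ by gcongr
  rw [intervalIntegral.integral_of_le zero_le_one,
    integral_eq_lintegral_of_nonneg_ae (.of_forall fun x ↦ by positivity)
      (by fun_prop : AEStronglyMeasurable (fun x ↦ ‖f x‖ * ‖g x‖) volume)]
  refine ENNReal.toReal_le_of_le_ofReal (by positivity) ?_
  rw [ENNReal.ofReal_mul hδ0, ofReal_integral_norm_eq_lintegral_enorm hgi]
  simpa only [ENNReal.ofReal_mul (norm_nonneg _), ofReal_norm] using hlint

/-- If `F ∈ L¹(ℝ)` has `δ_F = ess sup_x Σ_n |F(x+n)| ≤ δ` and `P` is a trigonometric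
polynomial with 1-periodic extension `P^#`, then `F·P^# ∈ L¹(ℝ)`, its Fourier transform is
`ξ ↦ Σ_n φ(n) F̂(ξ-n)`, and `‖F·P^#‖_{L¹(ℝ)} ≤ δ_F · ‖P‖_{L¹([0,1))}`. -/
theorem stmt2 (F : ℝ → ℂ) (hF : Integrable F volume) (δ : ℝ)
    (hsum : ∀ᵐ x : ℝ ∂volume, Summable fun n : ℤ => ‖F (x + (n : ℝ))‖)
    (hδ : ∀ᵐ x : ℝ ∂volume, (∑' n : ℤ, ‖F (x + (n : ℝ))‖) ≤ δ)
    (φ : ℤ → ℂ) (hφ : (Function.support φ).Finite)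
    (P : ℝ → ℂ)
    (hP : ∀ x : ℝ, P x = ∑' n : ℤ, φ n * Complex.exp (2 * π * I * (n : ℂ) * (x : ℂ))) :
    Integrable (fun x : ℝ => F x * P x) volume ∧
    (∀ ξ : ℝ, 𝓕 (fun x : ℝ => F x * P x) ξ = ∑' n : ℤ, φ n * 𝓕 F (ξ - (n : ℝ))) ∧
    (∫ x : ℝ, ‖F x * P x‖) ≤ δ * ∫ x in (0 : ℝ)..1, ‖P x‖ := by
  set s := hφ.toFinset
  have hsupp (f : ℤ → ℂ) : Function.support (fun n ↦ φ n * f n) ⊆ s :=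
    (Function.support_mul_subset_left _ _).trans hφ.coe_toFinset.superset
  obtain rfl : P = trigPoly s φ := by
    ext x
    rw [hP, tsum_eq_sum' (hsupp _)]
    refine Finset.sum_congr rfl fun n _ ↦ ?_
    rw [fourierChar_apply]
    push_cast
    ring_nf
  refine ⟨hF.mul_trigPoly s φ, fun ξ ↦ ?_, ?_⟩
  · rw [fourier_mul_trigPoly s φ hF, tsum_eq_sum' (hsupp _)]
  · have hPc := continuous_trigPoly s φ
    simp_rw [norm_mul]
    exact integral_norm_mul_norm_le_of_periodic hF.1 hPc.aestronglyMeasurable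
      (periodic_trigPoly s φ) hPc.integrableOn_Ioc hsum hδ

end
end

section
/- Let μ be a bounded regular Borel measure on ℝ, and suppose there is a constant C such that for every trigonometric polynomial P (with 1-periodic extension P^#), the total variation norm satisfies ‖P^# μ‖ ≤ C ‖P‖_{L^1([0,1))}. Then μ is absolutely continuous with respect to Lebesgue measure, i.e. dμ = F dx with F ∈ L^1(ℝ), and moreover ess sup_x Σ_{n∈ℤ} |F(x+n)| ≤ C. -/
open MeasureTheory Complex Real FourierTransform
open scoped ENNReal NNReal

noncomputable section

section Stmt3Aux

open Set

instance fact_zero_lt_one_real : Fact ((0:ℝ) < 1) := ⟨zero_lt_one⟩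

lemma tsum_eq_fourier (c : ℤ →₀ ℂ) (x : ℝ) :
    ∑' n : ℤ, c n * Complex.exp (2 * π * I * (n : ℂ) * (x : ℂ)) =
      (c.sum fun i a => a • fourier i) (x : AddCircle (1:ℝ)) := by
  rw [tsum_eq_sum (s := c.support) (fun n hn => by
    rw [Finsupp.notMem_support_iff.mp hn, zero_mul])]
  rw [Finsupp.sum, ContinuousMap.coe_sum, Finset.sum_apply]
  refine Finset.sum_congr rfl fun n _ => ?_
  rw [ContinuousMap.coe_smul, Pi.smul_apply, smul_eq_mul,
    fourier_coe_apply (T := 1)]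
  norm_num

lemma integrable_comp_mk (μ : Measure ℝ) [IsFiniteMeasure μ] (f : C(AddCircle (1:ℝ), ℂ)) :
    Integrable (fun x : ℝ => ‖f (x : AddCircle (1:ℝ))‖) μ := by
  have hc : Continuous fun x : ℝ => ‖f (x : AddCircle (1:ℝ))‖ :=
    (f.continuous.comp (AddCircle.continuous_mk' 1)).norm
  refine (integrable_const ‖f‖).mono' hc.aestronglyMeasurable ?_
  refine Filter.Eventually.of_forall fun x => ?_
  simpa using f.norm_coe_le_norm _

lemma hyp_const (μ : Measure ℝ) [IsFiniteMeasure μ] (C : ℝ)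
    (h : ∀ φ : ℤ → ℂ, (Function.support φ).Finite →
      (∫ x : ℝ, ‖∑' n : ℤ, φ n * Complex.exp (2 * π * I * (n : ℂ) * (x : ℂ))‖ ∂μ) ≤
        C * ∫ x in (0 : ℝ)..1, ‖∑' n : ℤ, φ n * Complex.exp (2 * π * I * (n : ℂ) * (x : ℂ))‖) :
    (μ Set.univ).toReal ≤ C := by
  have := h (fun n => if n = 0 then 1 else 0) (Set.Finite.subset (Set.finite_singleton 0)
    (Function.support_subset_iff'.mpr fun n hn => if_neg (by simpa using hn)))
  have he : ∀ x : ℝ, ∑' n : ℤ, (if n = (0:ℤ) then (1:ℂ) else 0) *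
      Complex.exp (2 * π * I * (n : ℂ) * (x : ℂ)) = 1 := by
    intro x
    rw [tsum_eq_single 0 (fun n hn => by simp [hn])]
    simp
  simp only [he, norm_one] at this
  rw [integral_const, intervalIntegral.integral_const] at this
  simpa [Measure.real] using this

lemma lemA (μ : Measure ℝ) [IsFiniteMeasure μ] (C : ℝ)
    (h : ∀ φ : ℤ → ℂ, (Function.support φ).Finite →
      (∫ x : ℝ, ‖∑' n : ℤ, φ n * Complex.exp (2 * π * I * (n : ℂ) * (x : ℂ))‖ ∂μ) ≤
        C * ∫ x in (0 : ℝ)..1, ‖∑' n : ℤ, φ n * Complex.exp (2 * π * I * (n : ℂ) * (x : ℂ))‖)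
    (f : C(AddCircle (1:ℝ), ℂ)) :
    ∫ x : ℝ, ‖f (x : AddCircle (1:ℝ))‖ ∂μ ≤ C * ∫ x in (0:ℝ)..1, ‖f (x : AddCircle (1:ℝ))‖ := by
  have hC : 0 ≤ C := le_trans ENNReal.toReal_nonneg (hyp_const μ C h)
  refine le_of_forall_pos_le_add fun ε hε => ?_
  set M := (μ Set.univ).toReal with hM
  have hM0 : 0 ≤ M := ENNReal.toReal_nonneg
  obtain ⟨δ, hδ, hcm⟩ : ∃ δ : ℝ, 0 < δ ∧ C * δ + δ * M ≤ ε := by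
    have hden : 0 < C + M + 1 := by linarith
    refine ⟨ε / (C + M + 1), div_pos hε hden, ?_⟩
    have h1 : C * (ε / (C + M + 1)) + ε / (C + M + 1) * M ≤ (C + M + 1) * (ε / (C + M + 1)) := by
      have := div_pos hε hden
      nlinarith
    calc C * (ε / (C + M + 1)) + ε / (C + M + 1) * M ≤ (C + M + 1) * (ε / (C + M + 1)) := h1
      _ = ε := by field_simp
  -- density
  have hf : f ∈ closure ((Submodule.span ℂ (Set.range (@fourier 1))) : Set C(AddCircle (1:ℝ), ℂ)) := by
    rw [← Submodule.topologicalClosure_coe, span_fourier_closure_eq_top]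
    trivial
  obtain ⟨g, hg, hdist⟩ := Metric.mem_closure_iff.mp hf δ hδ
  obtain ⟨c, rfl⟩ := Finsupp.mem_span_range_iff_exists_finsupp.mp hg
  set g : C(AddCircle (1:ℝ), ℂ) := c.sum fun i a => a • fourier i with hgdef
  have hptμ : ∀ x : ℝ, ‖f (x : AddCircle (1:ℝ))‖ ≤ ‖g (x : AddCircle (1:ℝ))‖ + δ := by
    intro x
    have := ContinuousMap.dist_apply_le_dist (f := f) (g := g) (x : AddCircle (1:ℝ))
    have h2 : dist (f (x : AddCircle (1:ℝ))) (g (x : AddCircle (1:ℝ))) ≤ δ := this.trans hdist.le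
    calc ‖f (x : AddCircle (1:ℝ))‖ ≤ ‖g (x : AddCircle (1:ℝ))‖ +
          dist (f (x : AddCircle (1:ℝ))) (g (x : AddCircle (1:ℝ))) := by
          rw [dist_eq_norm]; exact norm_le_norm_add_norm_sub' _ _
      _ ≤ _ := by linarith
  have hφ := h (fun n => c n) (Set.Finite.subset c.support.finite_toSet (fun n hn => by
    simpa [Function.mem_support, Finsupp.mem_support_iff] using hn))
  simp only [tsum_eq_fourier c] at hφ
  -- chain
  have int_f := integrable_comp_mk μ f
  have int_g := integrable_comp_mk μ g
  have step1 : ∫ x : ℝ, ‖f (x : AddCircle (1:ℝ))‖ ∂μ ≤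
      (∫ x : ℝ, ‖g (x : AddCircle (1:ℝ))‖ ∂μ) + δ * M := by
    have : ∫ x : ℝ, ‖f (x : AddCircle (1:ℝ))‖ ∂μ ≤
        ∫ x : ℝ, (‖g (x : AddCircle (1:ℝ))‖ + δ) ∂μ :=
      integral_mono int_f (int_g.add (integrable_const δ)) hptμ
    rwa [integral_add int_g (integrable_const δ), integral_const, smul_eq_mul, mul_comm] at this
  have intvf : IntervalIntegrable (fun x : ℝ => ‖f (x : AddCircle (1:ℝ))‖) volume 0 1 :=
    ((f.continuous.comp (AddCircle.continuous_mk' 1)).norm).intervalIntegrable 0 1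
  have intvg : IntervalIntegrable (fun x : ℝ => ‖g (x : AddCircle (1:ℝ))‖) volume 0 1 :=
    ((g.continuous.comp (AddCircle.continuous_mk' 1)).norm).intervalIntegrable 0 1
  have step2 : ∫ x in (0:ℝ)..1, ‖g (x : AddCircle (1:ℝ))‖ ≤
      (∫ x in (0:ℝ)..1, ‖f (x : AddCircle (1:ℝ))‖) + δ := by
    have hpt : ∀ x ∈ Set.Icc (0:ℝ) 1, ‖g (x : AddCircle (1:ℝ))‖ ≤ ‖f (x : AddCircle (1:ℝ))‖ + δ := by
      intro x _
      have := ContinuousMap.dist_apply_le_dist (f := f) (g := g) (x : AddCircle (1:ℝ))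
      have h2 : dist (f (x : AddCircle (1:ℝ))) (g (x : AddCircle (1:ℝ))) ≤ δ := this.trans hdist.le
      calc ‖g (x : AddCircle (1:ℝ))‖ ≤ ‖f (x : AddCircle (1:ℝ))‖ +
            dist (g (x : AddCircle (1:ℝ))) (f (x : AddCircle (1:ℝ))) := by
            rw [dist_eq_norm]; exact norm_le_norm_add_norm_sub' _ _
        _ ≤ _ := by rw [dist_comm] at h2; linarith
    calc ∫ x in (0:ℝ)..1, ‖g (x : AddCircle (1:ℝ))‖
        ≤ ∫ x in (0:ℝ)..1, (‖f (x : AddCircle (1:ℝ))‖ + δ) :=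
          intervalIntegral.integral_mono_on zero_le_one intvg
            (intvf.add (intervalIntegrable_const)) hpt
      _ = (∫ x in (0:ℝ)..1, ‖f (x : AddCircle (1:ℝ))‖) + δ := by
          rw [intervalIntegral.integral_add intvf intervalIntegrable_const]
          simp
  calc ∫ x : ℝ, ‖f (x : AddCircle (1:ℝ))‖ ∂μ
      ≤ (∫ x : ℝ, ‖g (x : AddCircle (1:ℝ))‖ ∂μ) + δ * M := step1
    _ ≤ C * (∫ x in (0:ℝ)..1, ‖g (x : AddCircle (1:ℝ))‖) + δ * M := by linarith [hφ]
    _ ≤ C * ((∫ x in (0:ℝ)..1, ‖f (x : AddCircle (1:ℝ))‖) + δ) + δ * M := by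
        have := mul_le_mul_of_nonneg_left step2 hC; linarith
    _ ≤ (C * ∫ x in (0:ℝ)..1, ‖f (x : AddCircle (1:ℝ))‖) + ε := by nlinarith [hcm]

lemma coe_sub_int (x : ℝ) (n : ℤ) :
    ((x - (n:ℝ) : ℝ) : AddCircle (1:ℝ)) = (x : AddCircle (1:ℝ)) := by
  have h1 : (((n:ℝ)) : AddCircle (1:ℝ)) = 0 := by
    have h : ((n:ℝ)) = n • (1:ℝ) := by simp
    rw [h, show ((n • (1:ℝ) : ℝ) : AddCircle (1:ℝ)) = n • ((1:ℝ) : AddCircle (1:ℝ)) from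
      QuotientAddGroup.mk_zsmul _ _ _, AddCircle.coe_period, smul_zero]
  rw [show ((x - (n:ℝ) : ℝ) : AddCircle (1:ℝ)) = (x : AddCircle (1:ℝ)) - ((n:ℝ) : AddCircle (1:ℝ))
    from QuotientAddGroup.mk_sub _ _ _, h1, sub_zero]


lemma key (μ : Measure ℝ) [IsFiniteMeasure μ] [μ.Regular] (C : ℝ) (hC : 0 ≤ C)
    (h : ∀ φ : ℤ → ℂ, (Function.support φ).Finite →
      (∫ x : ℝ, ‖∑' n : ℤ, φ n * Complex.exp (2 * π * I * (n : ℂ) * (x : ℂ))‖ ∂μ) ≤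
        C * ∫ x in (0 : ℝ)..1, ‖∑' n : ℤ, φ n * Complex.exp (2 * π * I * (n : ℂ) * (x : ℂ))‖)
    (E : Set ℝ) (hEm : MeasurableSet E) (hE1 : E ⊆ Ico (0:ℝ) 1) :
    μ (⋃ n : ℤ, (fun x => x - (n:ℝ)) ⁻¹' E) ≤ ENNReal.ofReal C * volume E := by
  set T := ⋃ n : ℤ, (fun x : ℝ => x - (n:ℝ)) ⁻¹' E with hTdef
  have hTm : MeasurableSet T :=
    MeasurableSet.iUnion fun n => (measurable_id.sub_const _) hEm
  refine ENNReal.le_of_forall_pos_le_add fun ε εpos hfin => ?_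
  set D := ENNReal.ofReal C + 1 with hDdef
  have hD0 : D ≠ 0 := by simp [hDdef]
  have hDtop : D ≠ ⊤ := by simp [hDdef]
  set δ := (ε : ℝ≥0∞) / D with hδdef
  have hδ0 : 0 < δ := ENNReal.div_pos (by exact_mod_cast εpos.ne') hDtop
  have hCδ : ENNReal.ofReal C * δ ≤ (ε : ℝ≥0∞) := by
    calc ENNReal.ofReal C * δ ≤ D * δ := mul_le_mul_left (le_add_right le_rfl) _
      _ = ε := ENNReal.mul_div_cancel hD0 hDtop
  have hEfin : volume E < ⊤ :=
    lt_of_le_of_lt (measure_mono hE1) (by rw [Real.volume_Ico]; simp)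
  -- choose open U
  obtain ⟨U0, hEU0, hU0open, hU0vol⟩ :=
    Set.exists_isOpen_lt_of_lt E (volume E + δ/2)
      (ENNReal.lt_add_right hEfin.ne (by simpa using hδ0.ne'))
  set U := U0 ∩ Ioo (-(1/2):ℝ) 1 with hUdef
  have hEU : E ⊆ U := fun x hx => ⟨hEU0 hx, ⟨by have := (hE1 hx).1; linarith, (hE1 hx).2⟩⟩
  have hUopen : IsOpen U := hU0open.inter isOpen_Ioo
  have hUm : MeasurableSet U := hUopen.measurableSet
  have hUvol : volume U ≤ volume E + δ/2 :=
    le_trans (measure_mono inter_subset_left) hU0vol.le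
  have hUsub : U ⊆ Ioo (-(1/2):ℝ) 1 := inter_subset_right
  -- the open set on the circle
  set O : Set (AddCircle (1:ℝ)) := (fun x : ℝ => (x : AddCircle (1:ℝ))) '' U with hOdef
  have hOopen : IsOpen O := QuotientAddGroup.isOpenMap_coe U hUopen
  have hOm : MeasurableSet O := hOopen.measurableSet
  have hpre : (fun x : ℝ => (x : AddCircle (1:ℝ))) ⁻¹' O =
      ⋃ n : ℤ, (fun x : ℝ => x - (n:ℝ)) ⁻¹' U := by
    ext x
    simp only [mem_preimage, mem_iUnion, mem_image]
    constructor
    · rintro ⟨y, hyU, hyx⟩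
      obtain ⟨n, hn⟩ := AddSubgroup.mem_zmultiples_iff.mp (QuotientAddGroup.eq_iff_sub_mem.mp hyx)
      refine ⟨-n, ?_⟩
      have : (n:ℝ) = y - x := by simpa using hn
      show x - ((-n : ℤ) : ℝ) ∈ U
      have h2 : x - ((-n : ℤ) : ℝ) = y := by push_cast; linarith
      rw [h2]; exact hyU
    · rintro ⟨n, hn⟩
      exact ⟨x - n, hn, coe_sub_int x n⟩
  have hOvol : volume O ≤ volume E + δ := by
    rw [AddCircle.add_projection_respects_measure (T := 1) 0 hOm]
    rw [zero_add]
    have hpre' : QuotientAddGroup.mk ⁻¹' O = ⋃ n : ℤ, (fun x : ℝ => x - (n:ℝ)) ⁻¹' U := hpre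
    rw [hpre']
    have hsub : (⋃ n : ℤ, (fun x : ℝ => x - (n:ℝ)) ⁻¹' U) ∩ Ioc (0:ℝ) 1 ⊆
        U ∪ (fun x : ℝ => x - (1:ℝ)) ⁻¹' (U ∩ Ioc (-(1/2):ℝ) 0) := by
      rintro x ⟨hxU, hx01⟩
      obtain ⟨n, hn⟩ := mem_iUnion.mp hxU
      have hn' : x - (n:ℝ) ∈ U := hn
      have hb := hUsub hn'
      obtain ⟨hb1, hb2⟩ := hb
      obtain ⟨hx0, hx1⟩ := hx01
      have hn1 : (-1:ℝ) < (n:ℝ) := by linarith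
      have hn2 : (n:ℝ) < 2 := by linarith
      have hn1' : (-1:ℤ) < n := by exact_mod_cast hn1
      have hn2' : n < 2 := by exact_mod_cast hn2
      interval_cases n
      · left; simpa using hn'
      · right
        simp only [mem_preimage, mem_inter_iff, mem_Ioc]
        refine ⟨by simpa using hn', by simpa using hb1, by linarith⟩
    refine le_trans (measure_mono hsub) (le_trans (measure_union_le _ _) ?_)
    have h2 : volume ((fun x:ℝ => x - (1:ℝ)) ⁻¹' (U ∩ Ioc (-(1/2):ℝ) 0)) =
        volume (U ∩ Ioc (-(1/2):ℝ) 0) := by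
      simp only [sub_eq_add_neg]
      exact measure_preimage_add_right _ _ _
    rw [h2]
    have h3 : volume (U ∩ Ioc (-(1/2):ℝ) 0) ≤ δ/2 := by
      have hsub2 : U ∩ Ioc (-(1/2):ℝ) 0 ⊆ (U \ E) ∪ {0} := by
        rintro x ⟨hxU, hxI⟩
        by_cases hxE : x ∈ E
        · right
          have h1 := (hE1 hxE).1
          have := hxI.2
          simp only [mem_singleton_iff]
          linarith
        · left; exact ⟨hxU, hxE⟩
      refine le_trans (measure_mono hsub2) (le_trans (measure_union_le _ _) ?_)
      rw [Real.volume_singleton, add_zero]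
      rw [measure_diff hEU hEm.nullMeasurableSet hEfin.ne]
      exact tsub_le_iff_right.mpr (by rw [add_comm]; exact hUvol)
    calc volume U + volume (U ∩ Ioc (-(1/2):ℝ) 0) ≤ (volume E + δ/2) + δ/2 :=
          add_le_add hUvol h3
      _ = volume E + δ := by rw [add_assoc, ENNReal.add_halves]
  -- per-compact bound
  have hOfin : volume O ≠ ⊤ := measure_ne_top _ _
  have hKbd : ∀ K : Set ℝ, K ⊆ T → IsCompact K → μ K ≤ ENNReal.ofReal C * volume O := by
    intro K hKT hKc
    set πK := (fun x : ℝ => (x : AddCircle (1:ℝ))) '' K with hπKdef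
    have hπKc : IsCompact πK := hKc.image (AddCircle.continuous_mk' 1)
    have hπKO : πK ⊆ O := by
      rintro _ ⟨x, hxK, rfl⟩
      obtain ⟨n, hn⟩ := mem_iUnion.mp (hKT hxK)
      exact ⟨x - n, hEU hn, coe_sub_int x n⟩
    obtain ⟨f, hf0, hf1, hf01⟩ := exists_continuous_zero_one_of_isClosed
      hOopen.isClosed_compl hπKc.isClosed
      (Set.disjoint_left.mpr fun a haOc haK => haOc (hπKO haK))
    set fc : C(AddCircle (1:ℝ), ℂ) :=
      ⟨fun q => ((f q : ℝ) : ℂ), Complex.continuous_ofReal.comp f.continuous⟩ with hfcdef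
    have hfc : ∀ q, ‖fc q‖ = f q := fun q => by
      simp only [hfcdef, ContinuousMap.coe_mk, Complex.norm_real]
      exact abs_of_nonneg (hf01 q).1
    have hμK : (μ K).toReal ≤ ∫ x : ℝ, ‖fc (x : AddCircle (1:ℝ))‖ ∂μ := by
      rw [← measureReal_def, ← integral_indicator_one hKc.measurableSet]
      refine integral_mono ((integrable_const (1:ℝ)).indicator hKc.measurableSet)
        (integrable_comp_mk μ fc) fun x => ?_
      by_cases hx : x ∈ K
      · rw [indicator_of_mem hx, hfc, hf1 ⟨x, hx, rfl⟩]; exact le_refl _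
      · rw [indicator_of_notMem hx]; exact norm_nonneg _
    have int_circ : Integrable (fun q : AddCircle (1:ℝ) => ‖fc q‖) volume := by
      refine (integrable_const ‖fc‖).mono'
        (fc.continuous.norm.aestronglyMeasurable) ?_
      exact Filter.Eventually.of_forall fun q => by simpa using fc.norm_coe_le_norm q
    have hcircle : ∫ x in (0:ℝ)..1, ‖fc (x : AddCircle (1:ℝ))‖ ≤ (volume O).toReal := by
      have hiip := AddCircle.intervalIntegral_preimage (T := 1) 0
        (fun q : AddCircle (1:ℝ) => ‖fc q‖)
      rw [zero_add] at hiip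
      rw [hiip]
      have hle : ∀ q, ‖fc q‖ ≤ O.indicator (fun _ => (1:ℝ)) q := by
        intro q
        rw [hfc]
        by_cases hq : q ∈ O
        · rw [indicator_of_mem hq]; exact (hf01 q).2
        · rw [indicator_of_notMem hq, hf0 hq]; exact le_refl _
      calc ∫ q : AddCircle (1:ℝ), ‖fc q‖ ≤ ∫ q, O.indicator (fun _ => (1:ℝ)) q :=
            integral_mono int_circ ((integrable_const 1).indicator hOm) hle
        _ = (volume O).toReal := integral_indicator_one hOm
    have hlem := lemA μ C h fc
    have hreal : (μ K).toReal ≤ C * (volume O).toReal :=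
      le_trans hμK (le_trans hlem (mul_le_mul_of_nonneg_left hcircle hC))
    rw [show μ K = ENNReal.ofReal ((μ K).toReal) from
      (ENNReal.ofReal_toReal (measure_ne_top μ K)).symm]
    calc ENNReal.ofReal ((μ K).toReal) ≤ ENNReal.ofReal (C * (volume O).toReal) :=
          ENNReal.ofReal_le_ofReal hreal
      _ = ENNReal.ofReal C * ENNReal.ofReal ((volume O).toReal) :=
          ENNReal.ofReal_mul hC
      _ = ENNReal.ofReal C * volume O := by rw [ENNReal.ofReal_toReal hOfin]
  -- conclude
  rw [hTm.measure_eq_iSup_isCompact]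
  refine iSup_le fun K => iSup_le fun hKT => iSup_le fun hKc => ?_
  calc μ K ≤ ENNReal.ofReal C * volume O := hKbd K hKT hKc
    _ ≤ ENNReal.ofReal C * (volume E + δ) := mul_le_mul_right hOvol _
    _ = ENNReal.ofReal C * volume E + ENNReal.ofReal C * δ := mul_add _ _ _
    _ ≤ ENNReal.ofReal C * volume E + ε := add_le_add_right hCδ _



end Stmt3Aux


/-- If `μ` is a bounded regular Borel measure on `ℝ` such that for every trigonometric
polynomial `P` (with 1-periodic extension `P^#`) the total variation of `P^# μ`, namely
`∫ |P^#| dμ`, is at most `C·‖P‖_{L¹([0,1))}`, then `μ` is absolutely continuous with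
respect to Lebesgue measure, `dμ = F dx` with `F ∈ L¹(ℝ)`, and
`ess sup_x Σ_n |F(x+n)| ≤ C`. -/
theorem stmt3 (μ : Measure ℝ) [IsFiniteMeasure μ] [μ.Regular] (C : ℝ)
    (h : ∀ φ : ℤ → ℂ, (Function.support φ).Finite →
      (∫ x : ℝ, ‖∑' n : ℤ, φ n * Complex.exp (2 * π * I * (n : ℂ) * (x : ℂ))‖ ∂μ) ≤
        C * ∫ x in (0 : ℝ)..1, ‖∑' n : ℤ, φ n * Complex.exp (2 * π * I * (n : ℂ) * (x : ℂ))‖) :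
    μ ≪ volume ∧ μ = volume.withDensity (μ.rnDeriv volume) ∧
    essSup (fun x : ℝ => ∑' n : ℤ, μ.rnDeriv volume (x + (n : ℝ))) volume ≤
      ENNReal.ofReal C := by
  have hC : 0 ≤ C := le_trans ENNReal.toReal_nonneg (hyp_const μ C h)
  -- absolute continuity
  have hac : μ ≪ volume := by
    refine Measure.AbsolutelyContinuous.mk fun s hs hs0 => ?_
    have hcover : s = ⋃ n : ℤ, s ∩ Set.Ico ((n:ℝ)) (n+1) := by
      rw [← Set.inter_iUnion, iUnion_Ico_intCast, Set.inter_univ]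
    have hpiece : ∀ n : ℤ, μ (s ∩ Set.Ico ((n:ℝ)) (n+1)) = 0 := by
      intro n
      set E := (fun x : ℝ => x + (n:ℝ)) ⁻¹' (s ∩ Set.Ico ((n:ℝ)) (n+1)) with hEdef
      have hEm : MeasurableSet E := (measurable_add_const _) (hs.inter measurableSet_Ico)
      have hE1 : E ⊆ Set.Ico (0:ℝ) 1 := by
        rintro x ⟨_, hx1, hx2⟩
        have hx1' : (n:ℝ) ≤ x + n := hx1
        have hx2' : x + n < (n:ℝ) + 1 := hx2
        exact ⟨by linarith, by linarith⟩
      have hEvol : volume E = 0 := by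
        rw [hEdef, measure_preimage_add_right]
        exact le_antisymm (le_trans (measure_mono Set.inter_subset_left) hs0.le) zero_le
      have hsub : s ∩ Set.Ico ((n:ℝ)) (n+1) ⊆ ⋃ m : ℤ, (fun x => x - (m:ℝ)) ⁻¹' E := by
        intro x hx
        refine Set.mem_iUnion.mpr ⟨n, ?_⟩
        show x - (n:ℝ) + n ∈ s ∩ Set.Ico ((n:ℝ)) (n+1)
        have hxx : x - (n:ℝ) + n = x := by ring
        rw [hxx]; exact hx
      have hkey := key μ C hC h E hEm hE1
      rw [hEvol, mul_zero] at hkey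
      exact le_antisymm (le_trans (measure_mono hsub) hkey) zero_le
    rw [hcover]
    exact le_antisymm (le_trans (measure_iUnion_le _) (by simp [hpiece])) zero_le
  have hwd : μ = volume.withDensity (μ.rnDeriv volume) :=
    (Measure.withDensity_rnDeriv_eq μ volume hac).symm
  refine ⟨hac, hwd, ?_⟩
  set F := μ.rnDeriv volume with hF
  have hFm : Measurable F := Measure.measurable_rnDeriv μ volume
  set G := fun x : ℝ => ∑' n : ℤ, F (x + (n:ℝ)) with hG
  have hGm : Measurable G := Measurable.ennreal_tsum fun n => hFm.comp (measurable_add_const _)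
  have claim1 : ∀ E : Set ℝ, MeasurableSet E → E ⊆ Set.Ico (0:ℝ) 1 →
      ∫⁻ x in E, G x ≤ ENNReal.ofReal C * volume E := by
    intro E hEm hE1
    have h1 : ∫⁻ x in E, G x ∂volume = ∑' n : ℤ, ∫⁻ x in E, F (x + (n:ℝ)) ∂volume :=
      lintegral_tsum fun n => (hFm.comp (measurable_add_const _)).aemeasurable
    have h2 : ∀ n : ℤ, ∫⁻ x in E, F (x + (n:ℝ)) ∂volume = μ ((fun x => x - (n:ℝ)) ⁻¹' E) := by
      intro n
      rw [(measurePreserving_add_right volume ((n:ℝ))).setLIntegral_comp_emb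
        (MeasurableEquiv.addRight ((n:ℝ))).measurableEmbedding F E]
      have himg : (fun x : ℝ => x + (n:ℝ)) '' E = (fun x : ℝ => x - (n:ℝ)) ⁻¹' E := by
        ext y
        constructor
        · rintro ⟨x, hx, rfl⟩
          show x + (n:ℝ) - n ∈ E
          rwa [add_sub_cancel_right]
        · intro hy
          exact ⟨y - n, hy, by ring⟩
      rw [himg]
      conv_rhs => rw [hwd]
      have hmeas : MeasurableSet ((fun x : ℝ => x - (n:ℝ)) ⁻¹' E) :=
        (measurable_id.sub_const _) hEm
      rw [withDensity_apply F hmeas]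
    have h3 : ∑' n : ℤ, μ ((fun x => x - (n:ℝ)) ⁻¹' E) =
        μ (⋃ n : ℤ, (fun x => x - (n:ℝ)) ⁻¹' E) := by
      have hmeasn : ∀ n : ℤ, MeasurableSet ((fun x : ℝ => x - (n:ℝ)) ⁻¹' E) :=
        fun n => (measurable_id.sub_const _) hEm
      rw [measure_iUnion ?_ hmeasn]
      intro m n hmn
      simp only [Function.onFun]
      rw [Set.disjoint_left]
      rintro x hxm hxn
      have h4 := hE1 hxm
      have h5 := hE1 hxn
      simp only [Set.mem_preimage, Set.mem_Ico] at h4 h5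
      have h6 : m < n + 1 := by
        have : (m:ℝ) < (n:ℝ) + 1 := by linarith [h4.1, h4.2, h5.1, h5.2]
        exact_mod_cast this
      have h7 : n < m + 1 := by
        have : (n:ℝ) < (m:ℝ) + 1 := by linarith [h4.1, h4.2, h5.1, h5.2]
        exact_mod_cast this
      omega
    rw [h1]
    simp_rw [h2]
    rw [h3]
    exact key μ C hC h E hEm hE1
  have claim2 : G ≤ᵐ[volume.restrict (Set.Ico (0:ℝ) 1)] fun _ => ENNReal.ofReal C := by
    refine ae_le_of_forall_setLIntegral_le_of_sigmaFinite hGm fun s hs _ => ?_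
    rw [Measure.restrict_restrict hs, setLIntegral_const]
    exact claim1 (s ∩ Set.Ico 0 1) (hs.inter measurableSet_Ico) Set.inter_subset_right
  have hper : ∀ (x : ℝ) (n : ℤ), G (x + (n:ℝ)) = G x := by
    intro x n
    have hcongr : ∀ m : ℤ, F (x + (n:ℝ) + (m:ℝ)) = F (x + (((n + m : ℤ)):ℝ)) := by
      intro m; congr 1; push_cast; ring
    calc G (x + (n:ℝ)) = ∑' m : ℤ, F (x + (((n + m : ℤ)):ℝ)) := tsum_congr hcongr
      _ = ∑' m : ℤ, F (x + (m:ℝ)) := (Equiv.addLeft n).tsum_eq (fun m => F (x + (m:ℝ)))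
      _ = G x := rfl
  have claim4 : G ≤ᵐ[volume] fun _ => ENNReal.ofReal C := by
    set S := {x : ℝ | ENNReal.ofReal C < G x} with hS
    have hSm : MeasurableSet S := measurableSet_lt measurable_const hGm
    have hS0 : volume (S ∩ Set.Ico (0:ℝ) 1) = 0 := by
      have h0 := claim2
      rw [Filter.EventuallyLE, ae_iff] at h0
      have hset : {a : ℝ | ¬ G a ≤ ENNReal.ofReal C} = S := by
        ext a; simp [hS, not_le]
      rw [hset, Measure.restrict_apply hSm] at h0
      exact h0
    have hSn : ∀ n : ℤ, volume (S ∩ Set.Ico ((n:ℝ)) ((n:ℝ)+1)) = 0 := by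
      intro n
      have hGn : ∀ x : ℝ, G (x - (n:ℝ)) = G x := by
        intro x
        have := hper (x - (n:ℝ)) n
        have hxx : x - (n:ℝ) + (n:ℝ) = x := by ring
        rw [hxx] at this
        exact this.symm
      have heq : S ∩ Set.Ico ((n:ℝ)) ((n:ℝ)+1) =
          (fun x : ℝ => x - (n:ℝ)) ⁻¹' (S ∩ Set.Ico (0:ℝ) 1) := by
        ext x
        simp only [Set.mem_inter_iff, Set.mem_preimage, Set.mem_Ico, hS, Set.mem_setOf_eq]
        constructor
        · rintro ⟨hxS, hx1, hx2⟩
          exact ⟨by rwa [hGn x], by linarith, by linarith⟩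
        · rintro ⟨hxS, hx1, hx2⟩
          exact ⟨by rwa [hGn x] at hxS, by linarith, by linarith⟩
      rw [heq, show (fun x:ℝ => x - (n:ℝ)) = (fun x:ℝ => x + (-(n:ℝ))) from funext fun x => by ring,
        measure_preimage_add_right, hS0]
    have hSnull : volume S = 0 := by
      have hcov : S ⊆ ⋃ n : ℤ, S ∩ Set.Ico ((n:ℝ)) ((n:ℝ)+1) := by
        intro x hx
        rw [← Set.inter_iUnion]
        refine ⟨hx, ?_⟩
        rw [iUnion_Ico_intCast]
        trivial
      exact le_antisymm (le_trans (measure_mono hcov)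
        (le_trans (measure_iUnion_le _) (by simp [hSn]))) zero_le
    rw [Filter.EventuallyLE, ae_iff]
    have hset : {a : ℝ | ¬ G a ≤ ENNReal.ofReal C} = S := by
      ext a; simp [hS, not_le]
    rw [hset]
    exact hSnull
  exact essSup_le_of_ae_le _ claim4

end
end

section
/- Let Λ ∈ L^1(ℝ) ∩ L^∞(ℝ) have compact support, and let ν ∈ M(𝕋) be a continuous measure (ν{y} = 0 for all y). If μ ∈ M(ℝ) satisfies μ̂(ξ) = Σ_{n∈ℤ} ν̂(n) Λ(ξ−n), then μ is a continuous measure: μ{y} = 0 for every y ∈ ℝ. -/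
/-!
By Wiener's lemma on `ℝ`, `(2R)⁻¹ ∫_{-R}^{R} μ̂(ξ) e^{2πiξy} dξ → μ{y}`. Suppose `Λ` vanishes
outside `[-N, N]` and insert the formula for `μ̂`: only the shifts `Λ(· - n)` with `|n| ≤ R + N`
meet the window `[-R, R]`. Writing `R = k + N`, those with `|n| ≤ k` lie inside it and contribute
`ν̂(n) e^{2πiny} Λ̂(-y)` each, while the `4N` shifts straddling its ends contribute `O(1)` in
total. What is left is `Λ̂(-y)` times the symmetric average `(2k+1)⁻¹ Σ_{|n|≤k} ν̂(n) e^{2πiny}`,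
which tends to `ν{y mod 1}` by Wiener's lemma on the circle. Hence `μ{y} = ν{y mod 1} Λ̂(-y)`,
and this vanishes since `ν` has no atoms.
-/

open MeasureTheory Complex Real Filter Topology

lemma norm_exp_two_pi_I_mul_mul (a b : ℝ) : ‖exp (2 * π * I * a * b)‖ = 1 := by
  simp [Complex.norm_exp]

lemma card_Icc_neg_natCast (k : ℕ) : (Finset.Icc (-(k : ℤ)) k).card = 2 * k + 1 := by
  simp only [Int.card_Icc]
  omega

lemma norm_sum_zpow_Icc_le {z : ℂ} (hz : ‖z‖ = 1) (hz1 : z ≠ 1) (k : ℕ) :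
    ‖∑ n ∈ Finset.Icc (-(k : ℤ)) k, z ^ n‖ ≤ 2 / ‖z - 1‖ := by
  have hz0 : z ≠ 0 := by rintro rfl; simp at hz
  have hshift : ∑ n ∈ Finset.Icc (-(k : ℤ)) k, z ^ n
      = z ^ (-(k : ℤ)) * ∑ j ∈ Finset.range (2 * k + 1), z ^ j := by
    rw [Finset.mul_sum]
    refine Finset.sum_nbij' (fun n => (n + k).toNat) (fun j => (j : ℤ) - k) ?_ ?_ ?_ ?_ ?_
      <;> intro n hn <;> simp only [Finset.mem_Icc, Finset.mem_range] at hn ⊢ <;> try omega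
    rw [← zpow_natCast, ← zpow_add₀ hz0]
    congr 1
    omega
  rw [hshift, geom_sum_eq hz1, norm_mul, norm_zpow, hz, one_zpow, one_mul, norm_div]
  gcongr
  calc ‖z ^ (2 * k + 1) - 1‖ ≤ ‖z ^ (2 * k + 1)‖ + ‖(1 : ℂ)‖ := norm_sub_le _ _
    _ = 2 := by rw [norm_pow, hz]; norm_num

namespace AddCircle

variable {T : ℝ}

lemma fourier_neg_mul_fourier (n : ℤ) (y t : AddCircle T) :
    fourier (-n) t * fourier n y = fourier n (y - t) := by
  rw [fourier_apply, fourier_apply, fourier_apply, smul_sub, sub_eq_add_neg, toCircle_add,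
    Circle.coe_mul, neg_smul, mul_comm]

lemma norm_integral_fourier_le (ν : Measure (AddCircle T)) [IsFiniteMeasure ν] (n : ℤ) :
    ‖∫ t, fourier n t ∂ν‖ ≤ ν.real Set.univ := by
  simpa using norm_integral_le_of_norm_le_const (μ := ν) (C := 1)
    (.of_forall fun t => (Circle.norm_coe _).le : ∀ᵐ t ∂ν, ‖fourier n t‖ ≤ 1)

lemma norm_avg_sum_fourier_le_one (k : ℕ) (s : AddCircle T) :
    ‖(2 * k + 1 : ℝ)⁻¹ • ∑ n ∈ Finset.Icc (-(k : ℤ)) k, fourier n s‖ ≤ 1 := by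
  rw [norm_smul, Real.norm_of_nonneg (by positivity), inv_mul_le_one₀ (by positivity)]
  calc ‖∑ n ∈ Finset.Icc (-(k : ℤ)) k, fourier n s‖
      ≤ ∑ n ∈ Finset.Icc (-(k : ℤ)) k, ‖fourier n s‖ := norm_sum_le _ _
    _ = 2 * k + 1 := by
      simp only [fourier_apply, Circle.norm_coe, Finset.sum_const, card_Icc_neg_natCast,
        nsmul_eq_mul, mul_one]
      push_cast
      ring

variable [Fact (0 < T)]

lemma tendsto_avg_sum_fourier (s : AddCircle T) :
    Tendsto (fun k : ℕ => (2 * k + 1 : ℝ)⁻¹ • ∑ n ∈ Finset.Icc (-(k : ℤ)) k, fourier n s)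
      atTop (𝓝 (({0} : Set (AddCircle T)).indicator 1 s)) := by
  by_cases hs : s = 0
  · subst hs
    refine tendsto_const_nhds.congr fun k => ?_
    rw [Set.indicator_of_mem (Set.mem_singleton _)]
    simp only [fourier_eval_zero, Finset.sum_const, card_Icc_neg_natCast, Pi.one_apply]
    rw [nsmul_eq_mul, mul_one, Complex.real_smul]
    push_cast
    rw [inv_mul_cancel₀ (by norm_cast)]
  · rw [Set.indicator_of_notMem (by simpa using hs)]
    set z : ℂ := (toCircle s : ℂ)
    have hz1 : z ≠ 1 := fun h => hs <| injective_toCircle (Fact.out : 0 < T).ne' <| by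
      simpa [z, ← Circle.coe_eq_one] using h
    have hpow : ∀ n : ℤ, fourier n s = z ^ n := fun n => by
      simp [z, fourier_apply, toCircle_zsmul]
    refine squeeze_zero_norm (a := fun k : ℕ => 2 / ‖z - 1‖ * (2 * k + 1 : ℝ)⁻¹) (fun k => ?_) ?_
    · rw [norm_smul, Real.norm_of_nonneg (by positivity), mul_comm,
        Finset.sum_congr rfl fun n _ => hpow n]
      gcongr
      exact norm_sum_zpow_Icc_le (Circle.norm_coe _) hz1 k
    · simpa using (tendsto_natCast_atTop_atTop.const_mul_atTop two_pos
        |>.atTop_add tendsto_const_nhds |>.inv_tendsto_atTop).const_mul (2 / ‖z - 1‖)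

theorem tendsto_avg_sum_fourierCoeff_mul_fourier (ν : Measure (AddCircle T)) [IsFiniteMeasure ν]
    (y : AddCircle T) :
    Tendsto (fun k : ℕ => (2 * k + 1 : ℝ)⁻¹ •
        ∑ n ∈ Finset.Icc (-(k : ℤ)) k, (∫ t, fourier (-n) t ∂ν) * fourier n y)
      atTop (𝓝 (ν.real {y} : ℂ)) := by
  have hkernel : ∀ k : ℕ, ∑ n ∈ Finset.Icc (-(k : ℤ)) k, (∫ t, fourier (-n) t ∂ν) * fourier n y
      = ∫ t, ∑ n ∈ Finset.Icc (-(k : ℤ)) k, fourier n (y - t) ∂ν := fun k => by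
    rw [integral_finsetSum _ fun n _ => (by fun_prop : Continuous fun t => fourier n (y - t))
      |>.integrable_of_hasCompactSupport (.of_compactSpace _)]
    refine Finset.sum_congr rfl fun n _ => ?_
    simp_rw [← integral_mul_const, fourier_neg_mul_fourier]
  have hind : ∫ t, ({y} : Set (AddCircle T)).indicator 1 t ∂ν = (ν.real {y} : ℂ) := by
    rw [integral_indicator (measurableSet_singleton y)]
    simp [Measure.real]
  simp_rw [hkernel, ← integral_smul, ← hind]
  refine tendsto_integral_of_dominated_convergence (fun _ => 1) (fun k => ?_) (integrable_const 1)
    (fun k => .of_forall fun t => ?_) (.of_forall fun t => ?_)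
  · fun_prop
  · exact norm_avg_sum_fourier_le_one k (y - t)
  · convert tendsto_avg_sum_fourier (y - t) using 2
    simp [Set.indicator_apply, sub_eq_zero, eq_comm]

end AddCircle

lemma tendsto_avg_intervalIntegral_exp (x : ℝ) :
    Tendsto (fun L : ℝ => (2 * L)⁻¹ • ∫ ξ in -L..L, exp (2 * π * I * ξ * x)) atTop
      (𝓝 (({0} : Set ℝ).indicator 1 x)) := by
  by_cases hx : x = 0
  · subst hx
    rw [Set.indicator_of_mem (Set.mem_singleton _), Pi.one_apply]
    refine tendsto_const_nhds.congr' ?_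
    filter_upwards [eventually_gt_atTop 0] with L hL
    simp only [Complex.ofReal_zero, mul_zero, Complex.exp_zero, intervalIntegral.integral_const,
      sub_neg_eq_add, smul_smul]
    rw [show (2 * L)⁻¹ * (L + L) = 1 by field_simp; ring, one_smul]
  · rw [Set.indicator_of_notMem (by simpa using hx)]
    set c : ℂ := 2 * π * I * x
    have hc : c ≠ 0 := by simp [c, hx, pi_ne_zero]
    have hbound : ∀ L, ‖∫ ξ in -L..L, exp (2 * π * I * ξ * x)‖ ≤ 2 / ‖c‖ := fun L => by
      simp_rw [show ∀ ξ : ℝ, 2 * π * I * ξ * x = c * ξ from fun ξ => by ring,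
        integral_exp_mul_complex hc, norm_div]
      gcongr
      refine (norm_sub_le _ _).trans ?_
      rw [norm_exp_two_pi_I_mul_mul, norm_exp_two_pi_I_mul_mul]
      norm_num
    refine squeeze_zero_norm' (a := fun L => 2 / ‖c‖ * (2 * L)⁻¹) ?_ ?_
    · filter_upwards [eventually_gt_atTop 0] with L hL
      rw [norm_smul, Real.norm_of_nonneg (by positivity), mul_comm]
      gcongr
      exact hbound L
    · simpa using (tendsto_id.const_mul_atTop two_pos).inv_tendsto_atTop.const_mul (2 / ‖c‖)

theorem tendsto_avg_intervalIntegral_fourier_mul_exp (μ : Measure ℝ) [IsFiniteMeasure μ] (y : ℝ) :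
    Tendsto (fun L : ℝ => (2 * L)⁻¹ • ∫ ξ in -L..L,
        (∫ x, exp (-(2 * π * I * ξ * x)) ∂μ) * exp (2 * π * I * ξ * y))
      atTop (𝓝 (μ.real {y} : ℂ)) := by
  set G : ℝ → ℝ → ℂ := fun ξ x => exp (2 * π * I * ξ * (y - x : ℝ))
  have hG : Continuous G.uncurry := by fun_prop
  have hinner : ∀ ξ : ℝ, (∫ x, exp (-(2 * π * I * ξ * x)) ∂μ) * exp (2 * π * I * ξ * y)
      = ∫ x, G ξ x ∂μ := fun ξ => by
    rw [← integral_mul_const]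
    congr 1 with x
    simp only [G, ← Complex.exp_add]
    congr 1
    push_cast
    ring
  have hfubini : ∀ L, ∫ ξ in -L..L, ∫ x, G ξ x ∂μ = ∫ x, (∫ ξ in -L..L, G ξ x) ∂μ := fun L => by
    have : IsFiniteMeasure (volume.restrict (Set.uIoc (-L) L)) :=
      isFiniteMeasure_restrict.2 (by simp [Set.uIoc])
    exact intervalIntegral_integral_swap <| (integrable_const (1 : ℝ)).mono'
      hG.aestronglyMeasurable (.of_forall fun ⟨ξ, x⟩ => (norm_exp_two_pi_I_mul_mul _ _).le)
  have hind : ∫ x, ({y} : Set ℝ).indicator 1 x ∂μ = (μ.real {y} : ℂ) := by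
    rw [integral_indicator (measurableSet_singleton y)]
    simp [Measure.real]
  simp_rw [hinner, hfubini, ← integral_smul, ← hind]
  refine tendsto_integral_filter_of_dominated_convergence (fun _ => 1) (l := atTop) (μ := μ)
    (F := fun L x => (2 * L)⁻¹ • ∫ ξ in -L..L, G ξ x) ?_ ?_ (integrable_const 1) ?_
  · have hG' : Continuous (Function.uncurry fun x ξ => G ξ x) := hG.comp continuous_swap
    refine .of_forall fun L => AEStronglyMeasurable.const_smul ?_ ((2 * L)⁻¹ : ℝ)
    exact (intervalIntegral.continuous_parametric_intervalIntegral_of_continuous'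
      hG' (-L) L).aestronglyMeasurable
  · filter_upwards [eventually_gt_atTop 0] with L hL
    refine .of_forall fun x => ?_
    rw [norm_smul, Real.norm_of_nonneg (by positivity), inv_mul_le_one₀ (by positivity)]
    refine (intervalIntegral.norm_integral_le_of_norm_le_const (C := 1) fun ξ _ =>
      (norm_exp_two_pi_I_mul_mul _ _).le).trans_eq ?_
    rw [one_mul, abs_of_pos (by linarith)]
    ring
  · refine .of_forall fun x => ?_
    convert tendsto_avg_intervalIntegral_exp (y - x) using 2
    simp [Set.indicator_apply, sub_eq_zero, eq_comm]

lemma exists_nat_eq_zero_of_le_abs {M : Type*} [Zero M] {f : ℝ → M} (hf : HasCompactSupport f) :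
    ∃ N : ℕ, ∀ u : ℝ, N ≤ |u| → f u = 0 := by
  obtain ⟨R, hR⟩ := hf.isBounded.subset_closedBall 0
  refine ⟨⌈R⌉₊ + 1, fun u hu => image_eq_zero_of_notMem_tsupport fun hmem => ?_⟩
  have : |u| ≤ R := by simpa [Real.dist_eq] using hR hmem
  push_cast at hu
  linarith [Nat.le_ceil R]

section ShiftedWindow

variable {Λ : ℝ → ℂ} {N : ℕ}

lemma norm_intervalIntegral_comp_sub_mul_exp_le (hΛ : Integrable Λ) (a b : ℝ) (n : ℤ) (y : ℝ) :
    ‖∫ ξ in a..b, Λ (ξ - n) * exp (2 * π * I * ξ * y)‖ ≤ ∫ u, ‖Λ u‖ := by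
  refine intervalIntegral.norm_integral_le_integral_norm_uIoc.trans ?_
  simp_rw [norm_mul, norm_exp_two_pi_I_mul_mul, mul_one]
  calc ∫ ξ in Set.uIoc a b, ‖Λ (ξ - n)‖ ≤ ∫ ξ, ‖Λ (ξ - n)‖ :=
        setIntegral_le_integral (hΛ.comp_sub_right _).norm (.of_forall fun _ => norm_nonneg _)
    _ = ∫ u, ‖Λ u‖ := integral_sub_right_eq_self (fun u => ‖Λ u‖) _

lemma tsum_mul_comp_sub_eq_sum (hN : ∀ u : ℝ, N ≤ |u| → Λ u = 0) (a : ℤ → ℂ) {R : ℕ} {ξ : ℝ}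
    (hξ : |ξ| ≤ R) :
    ∑' n : ℤ, a n * Λ (ξ - n) = ∑ n ∈ Finset.Icc (-(R + N : ℤ)) (R + N), a n * Λ (ξ - n) := by
  refine tsum_eq_sum fun n hn => ?_
  have hn' : (R + N + 1 : ℝ) ≤ |(n : ℝ)| := by
    rw [Finset.mem_Icc, not_and_or, not_le, not_le] at hn
    have : (R + N + 1 : ℤ) ≤ |n| := by rcases hn with h | h <;> rw [le_abs] <;> omega
    exact_mod_cast this
  rw [hN (ξ - n) (by linarith [abs_sub_abs_le_abs_sub (n : ℝ) ξ, abs_sub_comm (n : ℝ) ξ]),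
    mul_zero]

lemma intervalIntegral_comp_sub_mul_exp_eq (hN : ∀ u : ℝ, N ≤ |u| → Λ u = 0) {L : ℝ} {n : ℤ}
    (hn : |(n : ℝ)| + N ≤ L) (y : ℝ) :
    ∫ ξ in -L..L, Λ (ξ - n) * exp (2 * π * I * ξ * y)
      = fourier n (y : AddCircle (1 : ℝ)) * ∫ u, Λ u * exp (2 * π * I * u * y) := by
  have hsupp : Function.support (fun ξ : ℝ => Λ (ξ - n) * exp (2 * π * I * ξ * y))
      ⊆ Set.Ioc (-L) L := fun ξ hξ => by
    have : |ξ - n| < N := not_le.1 fun h => left_ne_zero_of_mul hξ (hN _ h)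
    constructor <;> linarith [abs_lt.1 this, le_abs_self (n : ℝ), neg_abs_le (n : ℝ)]
  have hshift : ∀ ξ : ℝ, Λ (ξ - n) * exp (2 * π * I * ξ * y)
      = fourier n (y : AddCircle (1 : ℝ)) * (Λ (ξ - n) * exp (2 * π * I * ↑(ξ - n) * y)) := by
    intro ξ
    rw [fourier_coe_apply, mul_left_comm, ← Complex.exp_add]
    congr 2
    push_cast
    ring
  rw [intervalIntegral.integral_eq_integral_of_support_subset hsupp, ← integral_const_mul]
  simp_rw [hshift]
  exact integral_sub_right_eq_self
    (fun u => fourier n (y : AddCircle (1 : ℝ)) * (Λ u * exp (2 * π * I * u * y))) n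

lemma intervalIntegral_tsum_mul_exp_eq_sum (hN : ∀ u : ℝ, N ≤ |u| → Λ u = 0)
    (hΛ : Integrable Λ) (a : ℤ → ℂ) (R : ℕ) (y : ℝ) :
    ∫ ξ in -(R : ℝ)..R, (∑' n : ℤ, a n * Λ (ξ - n)) * exp (2 * π * I * ξ * y)
      = ∑ n ∈ Finset.Icc (-(R + N : ℤ)) (R + N),
          a n * ∫ ξ in -(R : ℝ)..R, Λ (ξ - n) * exp (2 * π * I * ξ * y) := by
  have htrunc : Set.EqOn (fun ξ : ℝ => (∑' n : ℤ, a n * Λ (ξ - n)) * exp (2 * π * I * ξ * y))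
      (fun ξ => ∑ n ∈ Finset.Icc (-(R + N : ℤ)) (R + N),
        a n * (Λ (ξ - n) * exp (2 * π * I * ξ * y))) (Set.uIcc (-(R : ℝ)) R) := fun ξ hξ => by
    have hξ' : |ξ| ≤ R := abs_le.2 (by simpa [Set.uIcc_of_le] using hξ)
    simp only [tsum_mul_comp_sub_eq_sum hN a hξ', Finset.sum_mul, mul_assoc]
  have hint : ∀ n : ℤ, IntervalIntegrable
      (fun ξ : ℝ => a n * (Λ (ξ - n) * exp (2 * π * I * ξ * y))) volume (-(R : ℝ)) R := fun n =>
    ((hΛ.comp_sub_right n).intervalIntegrable.mul_continuousOn (by fun_prop)).const_mul _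
  rw [intervalIntegral.integral_congr htrunc,
    intervalIntegral.integral_finsetSum fun n _ => hint n]
  simp_rw [intervalIntegral.integral_const_mul]

lemma norm_intervalIntegral_tsum_mul_exp_sub_le (hN : ∀ u : ℝ, N ≤ |u| → Λ u = 0)
    (hΛ : Integrable Λ) {a : ℤ → ℂ} {C : ℝ} (ha : ∀ n, ‖a n‖ ≤ C) (y : ℝ) (k : ℕ) :
    ‖(∫ ξ in -((k + N : ℕ) : ℝ)..((k + N : ℕ) : ℝ),
        (∑' n : ℤ, a n * Λ (ξ - n)) * exp (2 * π * I * ξ * y))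
      - (∫ u, Λ u * exp (2 * π * I * u * y)) *
          ∑ n ∈ Finset.Icc (-(k : ℤ)) k, a n * fourier n (y : AddCircle (1 : ℝ))‖
      ≤ 4 * N * (C * ∫ u, ‖Λ u‖) := by
  set R := k + N
  have hsub : Finset.Icc (-(k : ℤ)) k ⊆ Finset.Icc (-(R + N : ℤ)) (R + N) :=
    Finset.Icc_subset_Icc (by omega) (by omega)
  have hinside : ∀ n ∈ Finset.Icc (-(k : ℤ)) k,
      a n * ∫ ξ in -(R : ℝ)..R, Λ (ξ - n) * exp (2 * π * I * ξ * y)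
        = (∫ u, Λ u * exp (2 * π * I * u * y)) * (a n * fourier n (y : AddCircle (1 : ℝ))) := by
    intro n hn
    have hn' : |(n : ℝ)| ≤ k := by
      rw [Finset.mem_Icc] at hn
      exact_mod_cast abs_le.2 hn
    rw [intervalIntegral_comp_sub_mul_exp_eq hN (by push_cast [R]; linarith) y]
    ring
  have hcard : (Finset.Icc (-(R + N : ℤ)) (R + N) \ Finset.Icc (-(k : ℤ)) k).card = 4 * N := by
    rw [Finset.card_sdiff_of_subset hsub, Int.card_Icc, Int.card_Icc]
    omega
  rw [intervalIntegral_tsum_mul_exp_eq_sum hN hΛ a R y, ← Finset.sum_sdiff hsub,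
    Finset.sum_congr rfl hinside, ← Finset.mul_sum, add_sub_cancel_right]
  refine (norm_sum_le _ _).trans ?_
  calc _ ≤ ∑ _n ∈ Finset.Icc (-(R + N : ℤ)) (R + N) \ Finset.Icc (-(k : ℤ)) k,
        C * ∫ u, ‖Λ u‖ := Finset.sum_le_sum fun n _ => by
          rw [norm_mul]
          exact mul_le_mul (ha n) (norm_intervalIntegral_comp_sub_mul_exp_le hΛ _ _ n y)
            (norm_nonneg _) ((norm_nonneg _).trans (ha n))
    _ = 4 * N * (C * ∫ u, ‖Λ u‖) := by
      rw [Finset.sum_const, hcard, nsmul_eq_mul]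
      push_cast
      ring

end ShiftedWindow

theorem measureReal_singleton_eq_mul_integral (Λ : ℝ → ℂ) (hΛ : Integrable Λ)
    (hsupp : HasCompactSupport Λ) (ν : Measure (AddCircle (1 : ℝ))) [IsFiniteMeasure ν]
    (μ : Measure ℝ) [IsFiniteMeasure μ]
    (hμ : ∀ ξ : ℝ, (∫ x : ℝ, exp (-(2 * π * I * ξ * x)) ∂μ) =
      ∑' n : ℤ, (∫ t, fourier (-n) t ∂ν) * Λ (ξ - n)) (y : ℝ) :
    (μ.real {y} : ℂ) = ν.real {(y : AddCircle (1 : ℝ))} * ∫ u, Λ u * exp (2 * π * I * u * y) := by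
  obtain ⟨N, hN⟩ := exists_nat_eq_zero_of_le_abs hsupp
  set a : ℤ → ℂ := fun n => ∫ t, fourier (-n) t ∂ν
  set c := ∫ u, Λ u * exp (2 * π * I * u * y)
  set R : ℕ → ℝ := fun k => ((k + N : ℕ) : ℝ)
  set W : ℕ → ℂ := fun k =>
    ∫ ξ in -R k..R k, (∑' n : ℤ, a n * Λ (ξ - n)) * exp (2 * π * I * ξ * y)
  set S : ℕ → ℂ := fun k =>
    ∑ n ∈ Finset.Icc (-(k : ℤ)) k, a n * fourier n (y : AddCircle (1 : ℝ))
  have hR : Tendsto R atTop atTop := tendsto_natCast_atTop_atTop.comp (tendsto_add_atTop_nat N)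
  have hwiener : Tendsto (fun k => (2 * R k)⁻¹ • W k) atTop (𝓝 (μ.real {y} : ℂ)) := by
    have h := (tendsto_avg_intervalIntegral_fourier_mul_exp μ y).comp hR
    simp only [hμ] at h
    exact h
  have hsplit : ∀ k : ℕ, (2 * R k)⁻¹ • W k = (2 * R k)⁻¹ • (W k - c * S k)
      + ((2 * k + 1) / (2 * R k) : ℝ) • (c * ((2 * k + 1 : ℝ)⁻¹ • S k)) := fun k => by
    have hk : (2 * k + 1 : ℂ) ≠ 0 := by exact_mod_cast (2 * k).succ_ne_zero
    simp only [Complex.real_smul]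
    push_cast
    field_simp
    ring
  have herr : Tendsto (fun k => (2 * R k)⁻¹ • (W k - c * S k)) atTop (𝓝 0) := by
    refine squeeze_zero_norm'
      (a := fun k => (2 * R k)⁻¹ * (4 * N * (ν.real Set.univ * ∫ u, ‖Λ u‖))) ?_ ?_
    · filter_upwards [hR.eventually_gt_atTop 0] with k hk
      rw [norm_smul, Real.norm_of_nonneg (by positivity)]
      gcongr
      exact norm_intervalIntegral_tsum_mul_exp_sub_le hN hΛ
        (fun n => AddCircle.norm_integral_fourier_le ν _) y k
    · simpa using (hR.const_mul_atTop two_pos).inv_tendsto_atTop.mul_const _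
  have hratio : Tendsto (fun k : ℕ => ((2 * k + 1) / (2 * R k) : ℝ)) atTop (𝓝 1) := by
    have h : Tendsto (fun k => 1 - (2 * N - 1) / (2 * R k)) atTop (𝓝 (1 - 0)) :=
      tendsto_const_nhds.sub (tendsto_const_nhds.div_atTop (hR.const_mul_atTop two_pos))
    rw [sub_zero] at h
    refine h.congr' ?_
    filter_upwards [hR.eventually_gt_atTop 0] with k hk
    field_simp
    simp only [R]
    push_cast
    ring
  have hcirc := AddCircle.tendsto_avg_sum_fourierCoeff_mul_fourier ν (y : AddCircle (1 : ℝ))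
  have hlim := herr.add (hratio.smul (hcirc.const_mul c))
  rw [zero_add, one_smul, ← funext hsplit] at hlim
  rw [tendsto_nhds_unique hwiener hlim, mul_comm]

theorem stmt9_general (Λ : ℝ → ℂ) (hΛ1 : Integrable Λ volume)
    (hsupp : HasCompactSupport Λ)
    (ν : Measure (AddCircle (1 : ℝ))) [IsFiniteMeasure ν]
    (hν : ∀ y : AddCircle (1 : ℝ), ν {y} = 0)
    (μ : Measure ℝ) [IsFiniteMeasure μ]
    (hμ : ∀ ξ : ℝ, (∫ x : ℝ, Complex.exp (-(2 * π * I * (ξ : ℂ) * (x : ℂ))) ∂μ) =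
      ∑' n : ℤ, (∫ t : AddCircle (1 : ℝ), fourier (-n) t ∂ν) * Λ (ξ - (n : ℝ))) :
    ∀ y : ℝ, μ {y} = 0 := by
  intro y
  have h := measureReal_singleton_eq_mul_integral Λ hΛ1 hsupp ν μ hμ y
  rw [measureReal_def ν, hν, ENNReal.toReal_zero, Complex.ofReal_zero, zero_mul,
    Complex.ofReal_eq_zero] at h
  exact (measureReal_eq_zero_iff (measure_ne_top μ _)).1 h

/-- Let `Λ ∈ L¹(ℝ) ∩ L^∞(ℝ)` have compact support, and let `ν ∈ M(𝕋)` be a continuous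
measure.  If `μ ∈ M(ℝ)` satisfies `μ̂(ξ) = Σ_n ν̂(n) Λ(ξ-n)`, then `μ` is continuous:
`μ{y} = 0` for every `y`. -/
theorem stmt9 (Λ : ℝ → ℂ) (hΛ1 : Integrable Λ volume) (hΛ2 : MemLp Λ ⊤ volume)
    (hsupp : HasCompactSupport Λ)
    (ν : Measure (AddCircle (1 : ℝ))) [IsFiniteMeasure ν]
    (hν : ∀ y : AddCircle (1 : ℝ), ν {y} = 0)
    (μ : Measure ℝ) [IsFiniteMeasure μ]
    (hμ : ∀ ξ : ℝ, (∫ x : ℝ, Complex.exp (-(2 * π * I * (ξ : ℂ) * (x : ℂ))) ∂μ) =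
      ∑' n : ℤ, (∫ t : AddCircle (1 : ℝ), fourier (-n) t ∂ν) * Λ (ξ - (n : ℝ))) :
    ∀ y : ℝ, μ {y} = 0 :=
  stmt9_general Λ hΛ1 hsupp ν hν μ hμ
end

section
/- Let S ∈ L^1(ℝ) with supp S ⊆ [1/4, 3/4], let S^# be its 1-periodic extension, and suppose Σ_n |(S^#)^∧(n)|^p < ∞ for some 1 ≤ p < ∞. Then sup_{ξ∈ℝ} Σ_{n∈ℤ} |Ŝ(ξ+n)|^p < ∞. -/
open MeasureTheory Complex Real FourierTransform
open scoped ENNReal NNReal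

noncomputable section
set_option maxHeartbeats 1000000

def rho (t : ℝ) : ℝ := max 0 (min 1 (min (4*t) (4-4*t)))

lemma rho_cont : Continuous rho := by unfold rho; fun_prop

lemma rho_nonneg (t : ℝ) : 0 ≤ rho t := le_max_left _ _

lemma rho_le_one (t : ℝ) : rho t ≤ 1 := by
  unfold rho
  exact max_le (by norm_num) (min_le_left _ _)

lemma rho_eq1 {t : ℝ} (h : t ∈ Set.Icc (0:ℝ) (1/4)) : rho t = 4*t := by
  obtain ⟨h1, h2⟩ := h
  unfold rho
  rw [min_eq_left (by linarith : 4*t ≤ 4-4*t), min_eq_right (by linarith : 4*t ≤ 1),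
    max_eq_right (by linarith)]

lemma rho_eq2 {t : ℝ} (h : t ∈ Set.Icc (1/4:ℝ) (3/4)) : rho t = 1 := by
  obtain ⟨h1, h2⟩ := h
  unfold rho
  rw [min_eq_left (le_min (by linarith) (by linarith) : (1:ℝ) ≤ min (4*t) (4-4*t))]
  exact max_eq_right (by norm_num)

lemma rho_eq3 {t : ℝ} (h : t ∈ Set.Icc (3/4:ℝ) 1) : rho t = 4-4*t := by
  obtain ⟨h1, h2⟩ := h
  unfold rho
  rw [min_eq_right (by linarith : 4-4*t ≤ 4*t), min_eq_right (by linarith : 4-4*t ≤ 1),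
    max_eq_right (by linarith)]

lemma rho_zero : rho 0 = 0 := by unfold rho; norm_num
lemma rho_one : rho 1 = 0 := by unfold rho; norm_num

lemma ofReal_norm_eq_coe_nnnorm {E : Type*} [SeminormedAddCommGroup E] (a : E) :
    ENNReal.ofReal ‖a‖ = (‖a‖₊ : ℝ≥0∞) := ENNReal.ofReal_eq_coe_nnreal _

def rhoHat (u : ℝ) : ℂ := ∫ t in (0:ℝ)..1, (rho t : ℂ) * Complex.exp (-(2*π*I*u*t))

lemma norm_exp_eq_one {z : ℂ} (h : z.re = 0) : ‖Complex.exp z‖ = 1 := by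
  rw [Complex.norm_exp, h, Real.exp_zero]

lemma rhoHat_le_one (u : ℝ) : ‖rhoHat u‖ ≤ 1 := by
  have := intervalIntegral.norm_integral_le_of_norm_le_const
    (C := 1) (f := fun t => (rho t : ℂ) * Complex.exp (-(2*π*I*u*t))) (a := (0:ℝ)) (b := 1) ?_
  · simpa [rhoHat] using this
  · intro x _
    rw [norm_mul, norm_exp_eq_one (by simp), mul_one, Complex.norm_real,
      Real.norm_eq_abs, _root_.abs_of_nonneg (rho_nonneg x)]
    exact rho_le_one x

lemma hasDeriv_aux (c : ℂ) (hc : c ≠ 0) (α β : ℝ) (t : ℝ) :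
    HasDerivAt (fun s : ℝ => ((((β:ℂ)*s+α)*c - β)/c^2) * Complex.exp (c*s))
      (((α:ℂ)+β*t) * Complex.exp (c*t)) t := by
  have h0 : HasDerivAt (fun s : ℝ => (s:ℂ)) 1 t := by
    simpa using (hasDerivAt_id t).ofReal_comp
  have h1 : HasDerivAt (fun s : ℝ => (((β:ℂ)*s+α)*c - β)/c^2) ((β:ℂ)/c) t := by
    have := ((((h0.const_mul (β:ℂ)).add_const (α:ℂ)).mul_const c).sub_const (β:ℂ)).div_const (c^2)
    convert this using 1
    case e'_4 => rfl
    field_simp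
  have h2 : HasDerivAt (fun s : ℝ => Complex.exp (c*s)) (Complex.exp (c*t) * c) t := by
    have hb : HasDerivAt (fun s : ℝ => c*(s:ℂ)) c t := by simpa using h0.const_mul c
    simpa using hb.cexp
  have := h1.mul h2
  convert this using 1
  case e'_4 => rfl
  case e'_8 => rfl
  field_simp
  ring

lemma integral_linexp (c : ℂ) (hc : c ≠ 0) (α β a b : ℝ) :
    ∫ t in a..b, ((α:ℂ)+β*t) * Complex.exp (c*t)
      = (((((β:ℂ)*b+α)*c - β)/c^2) * Complex.exp (c*b))
        - (((((β:ℂ)*a+α)*c - β)/c^2) * Complex.exp (c*a)) := by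
  refine intervalIntegral.integral_eq_sub_of_hasDerivAt (fun t _ => hasDeriv_aux c hc α β t) ?_
  apply Continuous.intervalIntegrable
  fun_prop

lemma rhoHat_eq {u : ℝ} (hu : u ≠ 0) :
    rhoHat u = (4/(-(2*π*I*u))^2) * (1 - Complex.exp (-(2*π*I*u)*(1/4))
      - Complex.exp (-(2*π*I*u)*(3/4)) + Complex.exp (-(2*π*I*u)*1)) := by
  set c : ℂ := -(2*π*I*u) with hcdef
  have hc : c ≠ 0 := by
    simp only [hcdef, neg_ne_zero, mul_ne_zero_iff]
    refine ⟨⟨⟨by norm_num, ?_⟩, Complex.I_ne_zero⟩, ?_⟩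
    · exact_mod_cast Real.pi_ne_zero
    · exact_mod_cast hu
  have hre : rhoHat u = ∫ t in (0:ℝ)..1, (rho t : ℂ) * Complex.exp (c*t) := by
    unfold rhoHat
    congr 1
    funext t
    rw [hcdef, neg_mul]
  have hcont : ∀ a b : ℝ, IntervalIntegrable (fun t : ℝ => (rho t : ℂ) * Complex.exp (c*t))
      volume a b := by
    intro a b
    apply Continuous.intervalIntegrable
    exact (Complex.continuous_ofReal.comp rho_cont).mul (by fun_prop)
  have hsplit : (∫ t in (0:ℝ)..1, (rho t : ℂ) * Complex.exp (c*t))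
      = (∫ t in (0:ℝ)..(1/4), (rho t : ℂ) * Complex.exp (c*t))
      + (∫ t in (1/4:ℝ)..(3/4), (rho t : ℂ) * Complex.exp (c*t))
      + (∫ t in (3/4:ℝ)..1, (rho t : ℂ) * Complex.exp (c*t)) := by
    rw [intervalIntegral.integral_add_adjacent_intervals (hcont 0 (1/4)) (hcont (1/4) (3/4)),
      intervalIntegral.integral_add_adjacent_intervals (hcont 0 (3/4)) (hcont (3/4) 1)]
  have e1 : (∫ t in (0:ℝ)..(1/4), (rho t : ℂ) * Complex.exp (c*t))
      = ∫ t in (0:ℝ)..(1/4), ((0:ℝ)+(4:ℝ)*t) * Complex.exp (c*t) := by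
    refine intervalIntegral.integral_congr fun t ht => ?_
    rw [Set.uIcc_of_le (by norm_num)] at ht
    rw [rho_eq1 ht]
    push_cast; ring
  have e2 : (∫ t in (1/4:ℝ)..(3/4), (rho t : ℂ) * Complex.exp (c*t))
      = ∫ t in (1/4:ℝ)..(3/4), ((1:ℝ)+(0:ℝ)*t) * Complex.exp (c*t) := by
    refine intervalIntegral.integral_congr fun t ht => ?_
    rw [Set.uIcc_of_le (by norm_num)] at ht
    rw [rho_eq2 ht]
    push_cast; ring
  have e3 : (∫ t in (3/4:ℝ)..1, (rho t : ℂ) * Complex.exp (c*t))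
      = ∫ t in (3/4:ℝ)..1, ((4:ℝ)+(-4:ℝ)*t) * Complex.exp (c*t) := by
    refine intervalIntegral.integral_congr fun t ht => ?_
    rw [Set.uIcc_of_le (by norm_num)] at ht
    rw [rho_eq3 ht]
    push_cast; ring
  rw [hre, hsplit, e1, e2, e3, integral_linexp c hc 0 4, integral_linexp c hc 1 0,
    integral_linexp c hc 4 (-4)]
  clear_value c
  push_cast
  simp only [mul_zero, zero_mul, Complex.exp_zero, mul_one, zero_add, add_zero]
  have h6 : c^6 * c⁻¹^6 = 1 := by rw [← mul_pow, mul_inv_cancel₀ hc, one_pow]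
  set E1 := Complex.exp (c*(1/4)) with hE1
  set E3 := Complex.exp (c*(3/4)) with hE3
  set E4 := Complex.exp c with hE4
  field_simp
  ring

lemma rhoHat_sq {u : ℝ} (hu : u ≠ 0) : ‖rhoHat u‖ ≤ 1/u^2 := by
  have hu2 : (0:ℝ) < u^2 := by positivity
  have hπ := Real.pi_gt_three
  rw [rhoHat_eq hu, norm_mul, norm_div, norm_pow]
  have hnc : ‖(-(2*(π:ℂ)*I*(u:ℂ)))‖ = 2*π*|u| := by
    rw [norm_neg, norm_mul, norm_mul, norm_mul]
    simp [Complex.norm_real, Real.norm_eq_abs, abs_of_pos Real.pi_pos]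
  have hX : ‖1 - Complex.exp (-(2*(π:ℂ)*I*u)*(1/4)) - Complex.exp (-(2*(π:ℂ)*I*u)*(3/4))
      + Complex.exp (-(2*(π:ℂ)*I*u)*1)‖ ≤ 4 := by
    have e1 : ‖Complex.exp (-(2*(π:ℂ)*I*u)*(1/4))‖ = 1 := norm_exp_eq_one (by simp)
    have e3 : ‖Complex.exp (-(2*(π:ℂ)*I*u)*(3/4))‖ = 1 := norm_exp_eq_one (by simp)
    have e4 : ‖Complex.exp (-(2*(π:ℂ)*I*u)*1)‖ = 1 := norm_exp_eq_one (by simp)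
    calc ‖1 - Complex.exp (-(2*(π:ℂ)*I*u)*(1/4)) - Complex.exp (-(2*(π:ℂ)*I*u)*(3/4))
        + Complex.exp (-(2*(π:ℂ)*I*u)*1)‖
        ≤ ‖1 - Complex.exp (-(2*(π:ℂ)*I*u)*(1/4)) - Complex.exp (-(2*(π:ℂ)*I*u)*(3/4))‖
          + ‖Complex.exp (-(2*(π:ℂ)*I*u)*1)‖ := norm_add_le _ _
      _ ≤ ‖1 - Complex.exp (-(2*(π:ℂ)*I*u)*(1/4))‖ + ‖Complex.exp (-(2*(π:ℂ)*I*u)*(3/4))‖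
          + ‖Complex.exp (-(2*(π:ℂ)*I*u)*1)‖ := by
            gcongr; exact norm_sub_le _ _
      _ ≤ ‖(1:ℂ)‖ + ‖Complex.exp (-(2*(π:ℂ)*I*u)*(1/4))‖ + ‖Complex.exp (-(2*(π:ℂ)*I*u)*(3/4))‖
          + ‖Complex.exp (-(2*(π:ℂ)*I*u)*1)‖ := by
            gcongr; exact norm_sub_le _ _
      _ ≤ 4 := by rw [e1, e3, e4, norm_one]; norm_num
  rw [hnc]
  have h4 : ‖(4:ℂ)‖ = 4 := by simp
  rw [h4]
  have hfac : (0:ℝ) ≤ 4/(2*π*|u|)^2 := by positivity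
  refine le_trans (mul_le_mul_of_nonneg_left hX hfac) ?_
  rw [mul_pow, mul_pow, _root_.sq_abs]
  have hden : (0:ℝ) < 2^2*π^2*u^2 := by
    have hπ0 := Real.pi_pos
    have : (0:ℝ) < 2^2*π^2 := by positivity
    exact mul_pos this hu2
  rw [div_mul_eq_mul_div, div_le_div_iff₀ hden hu2]
  nlinarith [hu2, sq_nonneg (π-3)]

lemma rhoHat_bound (η : ℝ) (k : ℤ) :
    ‖rhoHat (η + k)‖ ≤ 5 / (((k - ⌈-η⌉ : ℤ):ℝ)^2 + 1) := by
  set m : ℤ := ⌈-η⌉ with hm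
  set j : ℤ := k - m with hj
  have hpos : (0:ℝ) < ((j:ℤ):ℝ)^2 + 1 := by positivity
  have hm1 : (0:ℝ) ≤ η + m := by
    have := Int.le_ceil (-η); rw [← hm] at this; linarith
  have hm2 : (η:ℝ) + m < 1 := by
    have := Int.ceil_lt_add_one (-η); rw [← hm] at this; linarith
  have hd : (η + (k:ℝ)) - (j:ℝ) = η + m := by
    have : ((j:ℤ):ℝ) = (k:ℝ) - (m:ℝ) := by push_cast [hj]; ring
    rw [this]; ring
  by_cases h5 : ((j:ℤ):ℝ)^2 + 1 ≤ 5
  · have h1le : (1:ℝ) ≤ 5 / (((j:ℤ):ℝ)^2 + 1) := by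
      rw [le_div_iff₀ hpos]; linarith
    exact le_trans (rhoHat_le_one _) h1le
  · push_neg at h5
    have hx : (2:ℝ) < |(j:ℝ)| := by
      nlinarith [abs_nonneg ((j:ℤ):ℝ), _root_.sq_abs ((j:ℤ):ℝ)]
    have habs : |(j:ℝ)| - 1 ≤ |η + (k:ℝ)| := by
      have h1 : |((j:ℤ):ℝ) - (η + k)| < 1 := by
        rw [abs_sub_comm, abs_lt]
        constructor <;> [linarith [hd ▸ hm1]; linarith [hd ▸ hm2]]
      have := abs_sub_abs_le_abs_sub ((j:ℤ):ℝ) (η + (k:ℝ))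
      linarith
    have hdne : η + (k:ℝ) ≠ 0 := by
      intro h0
      rw [h0, abs_zero] at habs
      linarith
    have := rhoHat_sq hdne
    refine le_trans this ?_
    have hsq : (|(j:ℝ)| - 1)^2 ≤ (η + (k:ℝ))^2 := by
      have h0 : 0 ≤ |(j:ℝ)| - 1 := by linarith
      calc (|(j:ℝ)| - 1)^2 ≤ |η + (k:ℝ)|^2 := by nlinarith
        _ = (η + (k:ℝ))^2 := _root_.sq_abs _
    rw [div_le_div_iff₀ (by nlinarith) hpos]
    have h2 : ((j:ℤ):ℝ)^2 = |(j:ℝ)|^2 := (_root_.sq_abs _).symm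
    nlinarith [hsq]

lemma wSummable : Summable (fun j : ℤ => 5/((j:ℝ)^2+1)) := by
  have hbase : Summable (fun j : ℤ => 5*(1/(j:ℝ)^2)
      + Set.indicator {(0:ℤ)} (fun _ => (5:ℝ)) j) := by
    refine Summable.add ((Real.summable_one_div_int_pow.mpr ?_).mul_left 5) ?_
    · norm_num
    · exact summable_of_ne_finset_zero (s := {(0:ℤ)})
        (fun j hj => Set.indicator_of_notMem (by simpa using hj) _)
  refine Summable.of_nonneg_of_le (fun j => by positivity) (fun j => ?_) hbase
  by_cases h0 : j = 0
  · subst h0; simp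
  · have hj : ((j:ℤ):ℝ) ≠ 0 := Int.cast_ne_zero.mpr h0
    have hj2 : (0:ℝ) < ((j:ℤ):ℝ)^2 := by positivity
    rw [Set.indicator_of_notMem (by simpa using h0), add_zero, mul_one_div]
    rw [div_le_div_iff₀ (by positivity) hj2]
    nlinarith

lemma rhoHat_tsum_le (η : ℝ) :
    ∑' k : ℤ, (‖rhoHat (η+k)‖₊ : ℝ≥0∞) ≤ ENNReal.ofReal (∑' j : ℤ, 5/((j:ℝ)^2+1)) := by
  calc ∑' k : ℤ, (‖rhoHat (η+k)‖₊ : ℝ≥0∞)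
      ≤ ∑' k : ℤ, ENNReal.ofReal (5/(((k - ⌈-η⌉ :ℤ):ℝ)^2+1)) := by
        refine ENNReal.tsum_le_tsum fun k => ?_
        rw [← ofReal_norm_eq_coe_nnnorm]
        exact ENNReal.ofReal_le_ofReal (rhoHat_bound η k)
    _ = ∑' j : ℤ, ENNReal.ofReal (5/((j:ℝ)^2+1)) :=
        (Equiv.subRight (⌈-η⌉)).tsum_eq (fun j => ENNReal.ofReal (5/((j:ℝ)^2+1)))
    _ = ENNReal.ofReal (∑' j : ℤ, 5/((j:ℝ)^2+1)) :=
        (ENNReal.ofReal_tsum_of_nonneg (fun j => by positivity) wSummable).symm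

def cI (S : ℝ → ℂ) (k : ℤ) : ℂ :=
  ∫ t in Set.Icc (1/4:ℝ) (3/4), Complex.exp (2*π*I*k*t) * S t

def cS (S : ℝ → ℂ) (n : ℤ) : ℂ :=
  ∫ t in (0:ℝ)..1, S t * Complex.exp (-(2 * π * I * (n : ℂ) * (t : ℂ)))

lemma cI_eq (S : ℝ → ℂ)
    (hsupp : ∀ x : ℝ, x ∉ Set.Icc (1 / 4 : ℝ) (3 / 4) → S x = 0) (k : ℤ) :
    cI S k = cS S (-k) := by
  have h1 : cI S k = ∫ t : ℝ, Complex.exp (2*π*I*k*t) * S t :=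
    setIntegral_eq_integral_of_forall_compl_eq_zero
      (fun x hx => by rw [hsupp x hx, mul_zero])
  have h2 : cS S (-k) = ∫ t : ℝ, S t * Complex.exp (-(2 * π * I * ((-k:ℤ) : ℂ) * (t : ℂ))) := by
    unfold cS
    rw [intervalIntegral.integral_of_le zero_le_one]
    exact setIntegral_eq_integral_of_forall_compl_eq_zero
      (fun x hx => by
        rw [hsupp x (fun hmem => hx ⟨by linarith [hmem.1], by linarith [hmem.2]⟩), zero_mul])
  rw [h1, h2]
  refine integral_congr_ae (Filter.Eventually.of_forall fun t => ?_)
  rw [mul_comm]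
  congr 1
  push_cast
  ring

lemma cI_norm_le (S : ℝ → ℂ) (k : ℤ) :
    ‖cI S k‖ ≤ ∫ t in Set.Icc (1/4:ℝ) (3/4), ‖S t‖ := by
  refine le_trans (norm_integral_le_integral_norm _) (le_of_eq ?_)
  refine setIntegral_congr_fun measurableSet_Icc fun t _ => ?_
  rw [norm_mul, norm_exp_eq_one (by simp), one_mul]

lemma master (S : ℝ → ℂ) (hS : Integrable S volume)
    (hsupp : ∀ x : ℝ, x ∉ Set.Icc (1 / 4 : ℝ) (3 / 4) → S x = 0) (η : ℝ) :
    𝓕 S η = ∑' k : ℤ, rhoHat (η + k) * cI S k := by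
  haveI : Fact ((0:ℝ) < 1) := ⟨one_pos⟩
  set f : ℝ → ℂ := fun t => (rho t : ℂ) * Complex.exp (-(2*π*I*η*t)) with hf
  have hf_cont : Continuous f := by
    exact (Complex.continuous_ofReal.comp rho_cont).mul (by fun_prop)
  have hΦcont : Continuous (AddCircle.liftIco 1 0 f) := by
    refine AddCircle.liftIco_zero_continuous ?_ hf_cont.continuousOn
    simp [hf, rho_zero, rho_one]
  set Φ : C(AddCircle 1, ℂ) := ⟨AddCircle.liftIco 1 0 f, hΦcont⟩ with hΦ
  have hcoeffΦ : ∀ n : ℤ, fourierCoeff (⇑Φ) n = rhoHat (η + n) := by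
    intro n
    show fourierCoeff (AddCircle.liftIco 1 0 f) n = _
    rw [fourierCoeff_liftIco_eq (T := 1) f n, fourierCoeffOn_eq_integral]
    simp only [fourier_coe_apply, smul_eq_mul]
    norm_num
    unfold rhoHat
    refine intervalIntegral.integral_congr fun t _ => ?_
    show Complex.exp _ * ((rho t : ℂ) * Complex.exp _) = _
    rw [mul_comm, mul_assoc, ← Complex.exp_add]
    congr 2
    push_cast
    ring
  have hW : Summable (fun n : ℤ => 5/(((n - ⌈-η⌉ : ℤ):ℝ)^2+1)) := by
    have h := (Equiv.subRight (⌈-η⌉ : ℤ)).summable_iff.mpr wSummable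
    simpa [Function.comp_def, Equiv.subRight] using h
  have hsumΦ : Summable (fourierCoeff (⇑Φ)) := by
    apply Summable.of_norm
    refine Summable.of_nonneg_of_le (fun n => norm_nonneg _) (fun n => ?_) hW
    rw [hcoeffΦ]
    exact rhoHat_bound η n
  have hpt : ∀ t ∈ Set.Icc (1/4:ℝ) (3/4),
      HasSum (fun k:ℤ => rhoHat (η+k) * Complex.exp (2*π*I*k*t))
        (Complex.exp (-(2*π*I*η*t))) := by
    intro t ht
    have h0 := has_pointwise_sum_fourier_series_of_summable hsumΦ
      ((t : ℝ) : AddCircle (1:ℝ))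
    have hΦt : Φ ((t : ℝ) : AddCircle (1:ℝ)) = Complex.exp (-(2*π*I*η*t)) := by
      show AddCircle.liftIco 1 0 f ((t : ℝ) : AddCircle (1:ℝ)) = _
      rw [AddCircle.liftIco_coe_apply
        (Set.mem_Ico.mpr ⟨by linarith [ht.1], by linarith [ht.2]⟩)]
      show (rho t : ℂ) * Complex.exp (-(2*π*I*η*t)) = _
      rw [rho_eq2 ht, Complex.ofReal_one, one_mul]
    rw [hΦt] at h0
    convert h0 using 2 with k
    rw [hcoeffΦ, smul_eq_mul, fourier_coe_apply]
    norm_num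
  have hFS : 𝓕 S η = ∫ t in Set.Icc (1/4:ℝ) (3/4), Complex.exp (-(2*π*I*η*t)) * S t := by
    rw [Real.fourier_real_eq_integral_exp_smul]
    rw [← setIntegral_eq_integral_of_forall_compl_eq_zero
      (s := Set.Icc (1/4:ℝ) (3/4)) (fun x hx => by rw [hsupp x hx, smul_zero])]
    refine setIntegral_congr_fun measurableSet_Icc fun t _ => ?_
    rw [smul_eq_mul]
    congr 1
    push_cast
    ring
  rw [hFS]
  have hg : ∀ t ∈ Set.Icc (1/4:ℝ) (3/4), Complex.exp (-(2*π*I*η*t)) * S t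
      = ∑' k : ℤ, rhoHat (η+k) * Complex.exp (2*π*I*k*t) * S t := by
    intro t ht
    exact (((hpt t ht).mul_right (S t)).tsum_eq).symm
  rw [setIntegral_congr_fun measurableSet_Icc hg]
  have hmeas : ∀ k : ℤ, AEStronglyMeasurable
      (fun t : ℝ => rhoHat (η+k) * Complex.exp (2*π*I*k*t) * S t)
      (volume.restrict (Set.Icc (1/4:ℝ) (3/4))) := by
    intro k
    exact ((aestronglyMeasurable_const.mul (by fun_prop : Continuous
      (fun t : ℝ => Complex.exp (2*π*I*k*t))).aestronglyMeasurable)).mul hS.1.restrict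
  have hSfin : ∫⁻ t in Set.Icc (1/4:ℝ) (3/4), (‖S t‖₊ : ℝ≥0∞) < ⊤ := hS.restrict.2
  have hnn : ∀ (k : ℤ) (t : ℝ),
      (‖rhoHat (η+k) * Complex.exp (2*π*I*k*t) * S t‖₊ : ℝ≥0∞)
        = (‖rhoHat (η+k)‖₊ : ℝ≥0∞) * ‖S t‖₊ := by
    intro k t
    rw [nnnorm_mul, nnnorm_mul]
    have he' : ‖Complex.exp (2*π*(I:ℂ)*(k:ℂ)*(t:ℂ))‖ = 1 := by
      apply norm_exp_eq_one
      simp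
    have he : ‖Complex.exp (2*π*(I:ℂ)*(k:ℂ)*(t:ℂ))‖₊ = 1 :=
      NNReal.coe_injective (by simpa using he')
    rw [he, mul_one]
    push_cast
    ring
  have hfin : ∑' k : ℤ, ∫⁻ t in Set.Icc (1/4:ℝ) (3/4),
      (‖rhoHat (η+k) * Complex.exp (2*π*I*k*t) * S t‖₊ : ℝ≥0∞) ≠ ⊤ := by
    have heq : ∀ k : ℤ, ∫⁻ t in Set.Icc (1/4:ℝ) (3/4),
        (‖rhoHat (η+k) * Complex.exp (2*π*I*k*t) * S t‖₊ : ℝ≥0∞)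
        = (‖rhoHat (η+k)‖₊ : ℝ≥0∞) * ∫⁻ t in Set.Icc (1/4:ℝ) (3/4), (‖S t‖₊ : ℝ≥0∞) := by
      intro k
      rw [← lintegral_const_mul' _ _ ENNReal.coe_ne_top]
      exact lintegral_congr fun t => hnn k t
    have : ∑' k : ℤ, ∫⁻ t in Set.Icc (1/4:ℝ) (3/4),
        (‖rhoHat (η+k) * Complex.exp (2*π*I*k*t) * S t‖₊ : ℝ≥0∞)
        = (∑' k : ℤ, (‖rhoHat (η+k)‖₊ : ℝ≥0∞)) * ∫⁻ t in Set.Icc (1/4:ℝ) (3/4),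
            (‖S t‖₊ : ℝ≥0∞) := by
      rw [← ENNReal.tsum_mul_right]
      exact tsum_congr heq
    rw [this]
    exact (ENNReal.mul_lt_top
      (lt_of_le_of_lt (rhoHat_tsum_le η) ENNReal.ofReal_lt_top) hSfin).ne
  rw [integral_tsum hmeas hfin]
  refine tsum_congr fun k => ?_
  unfold cI
  simp_rw [mul_assoc]
  rw [integral_const_mul]

lemma enorm_FS_le (S : ℝ → ℂ) (hS : Integrable S volume)
    (hsupp : ∀ x : ℝ, x ∉ Set.Icc (1 / 4 : ℝ) (3 / 4) → S x = 0) (η : ℝ) :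
    (‖𝓕 S η‖₊ : ℝ≥0∞) ≤ ∑' k : ℤ, (‖rhoHat (η+k)‖₊ : ℝ≥0∞) * (‖cI S k‖₊ : ℝ≥0∞) := by
  have hW : Summable (fun n : ℤ => 5/(((n - ⌈-η⌉ : ℤ):ℝ)^2+1)) := by
    have h := (Equiv.subRight (⌈-η⌉ : ℤ)).summable_iff.mpr wSummable
    simpa [Function.comp_def, Equiv.subRight] using h
  have hM0 : 0 ≤ ∫ t in Set.Icc (1/4:ℝ) (3/4), ‖S t‖ :=
    integral_nonneg fun t => norm_nonneg _
  have hsum : Summable (fun k : ℤ => ‖rhoHat (η+k) * cI S k‖) := by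
    refine Summable.of_nonneg_of_le (fun k => norm_nonneg _) (fun k => ?_)
      (hW.mul_right (∫ t in Set.Icc (1/4:ℝ) (3/4), ‖S t‖))
    rw [norm_mul]
    exact mul_le_mul (rhoHat_bound η k) (cI_norm_le S k) (norm_nonneg _) (by positivity)
  rw [master S hS hsupp η, ← ofReal_norm_eq_coe_nnnorm]
  calc ENNReal.ofReal ‖∑' k : ℤ, rhoHat (η+k) * cI S k‖
      ≤ ENNReal.ofReal (∑' k : ℤ, ‖rhoHat (η+k) * cI S k‖) :=
        ENNReal.ofReal_le_ofReal (norm_tsum_le_tsum_norm hsum)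
    _ = ∑' k : ℤ, ENNReal.ofReal ‖rhoHat (η+k) * cI S k‖ :=
        ENNReal.ofReal_tsum_of_nonneg (fun k => norm_nonneg _) hsum
    _ = ∑' k : ℤ, (‖rhoHat (η+k)‖₊ : ℝ≥0∞) * (‖cI S k‖₊ : ℝ≥0∞) := by
        refine tsum_congr fun k => ?_
        rw [norm_mul, ENNReal.ofReal_mul (norm_nonneg _), ofReal_norm_eq_coe_nnnorm,
          ofReal_norm_eq_coe_nnnorm]

lemma jensen (a b : ℤ → ℝ≥0∞) {p : ℝ} (hp : 1 ≤ p) :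
    (∑' k, a k * b k)^p ≤ (∑' k, a k)^(p-1) * ∑' k, a k * (b k)^p := by
  rcases eq_or_lt_of_le hp with heq | hlt
  · rw [← heq]
    simp [ENNReal.rpow_one]
  · have hpq : p.HolderConjugate (p/(p-1)) := Real.HolderConjugate.conjExponent hlt
    set q : ℝ := p/(p-1) with hq
    have hp0 : (0:ℝ) ≤ p := by linarith
    have hq0 : (0:ℝ) ≤ q := hpq.symm.nonneg
    have hh := ENNReal.lintegral_mul_le_Lp_mul_Lq (Measure.count : Measure ℤ) hpq
      (f := fun k => (a k)^(p⁻¹) * b k) (g := fun k => (a k)^(q⁻¹))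
      (measurable_of_countable _).aemeasurable (measurable_of_countable _).aemeasurable
    rw [lintegral_count, lintegral_count, lintegral_count] at hh
    have e0 : ∀ k, ((fun k => (a k)^(p⁻¹) * b k) * fun k => (a k)^(q⁻¹)) k = a k * b k := by
      intro k
      show (a k)^(p⁻¹) * b k * (a k)^(q⁻¹) = a k * b k
      rw [mul_right_comm, ← ENNReal.rpow_add_of_nonneg _ _ (by positivity) (by positivity),
        hpq.inv_add_inv_eq_one, ENNReal.rpow_one]
    have e1 : ∀ k, ((a k)^(p⁻¹) * b k)^p = a k * (b k)^p := by
      intro k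
      rw [ENNReal.mul_rpow_of_nonneg _ _ hp0, ← ENNReal.rpow_mul,
        inv_mul_cancel₀ (by linarith : p ≠ 0), ENNReal.rpow_one]
    have e2 : ∀ k, ((a k)^(q⁻¹))^q = a k := by
      intro k
      rw [← ENNReal.rpow_mul, inv_mul_cancel₀ hpq.symm.ne_zero, ENNReal.rpow_one]
    simp_rw [e0, e1, e2] at hh
    calc (∑' k, a k * b k)^p
        ≤ ((∑' k, a k * (b k)^p)^(1/p) * (∑' k, a k)^(1/q))^p :=
          ENNReal.rpow_le_rpow hh hp0
      _ = (∑' k, a k)^(p-1) * ∑' k, a k * (b k)^p := by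
          rw [ENNReal.mul_rpow_of_nonneg _ _ hp0, ← ENNReal.rpow_mul, ← ENNReal.rpow_mul,
            one_div, one_div, inv_mul_cancel₀ (by linarith : p ≠ 0), ENNReal.rpow_one,
            inv_mul_eq_div, hpq.div_conj_eq_sub_one]
          rw [mul_comm]



/-- Let `S ∈ L¹(ℝ)` with `supp S ⊆ [1/4, 3/4]`, and suppose the Fourier coefficients of
its 1-periodic extension satisfy `Σ_n |(S^#)^∧(n)|^p < ∞` for some `1 ≤ p < ∞`.  Then
`sup_ξ Σ_n |Ŝ(ξ+n)|^p < ∞`. -/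
theorem stmt11 (S : ℝ → ℂ) (hS : Integrable S volume)
    (hsupp : ∀ x : ℝ, x ∉ Set.Icc (1 / 4 : ℝ) (3 / 4) → S x = 0)
    (p : ℝ) (hp : 1 ≤ p)
    (hcoef : Summable fun n : ℤ =>
      ‖∫ t in (0 : ℝ)..1, S t * Complex.exp (-(2 * π * I * (n : ℂ) * (t : ℂ)))‖ ^ p) :
    ∃ B : ℝ, ∀ ξ : ℝ,
      (Summable fun n : ℤ => ‖𝓕 S (ξ + (n : ℝ))‖ ^ p) ∧
      (∑' n : ℤ, ‖𝓕 S (ξ + (n : ℝ))‖ ^ p) ≤ B := by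
  have hp0 : (0:ℝ) ≤ p := by linarith
  have hp1 : (0:ℝ) ≤ p - 1 := by linarith
  have hcoef' : Summable fun n : ℤ => ‖cS S n‖ ^ p := hcoef
  set W : ℝ≥0∞ := ENNReal.ofReal (∑' j : ℤ, 5/((j:ℝ)^2+1)) with hWdef
  have hWlt : W < ⊤ := ENNReal.ofReal_lt_top
  set b : ℤ → ℝ≥0∞ := fun k => (‖cS S k‖₊ : ℝ≥0∞) with hbdef
  have hBc : (∑' k : ℤ, (b k)^p) = ENNReal.ofReal (∑' n : ℤ, ‖cS S n‖ ^ p) := by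
    rw [ENNReal.ofReal_tsum_of_nonneg (fun n => Real.rpow_nonneg (norm_nonneg _) p) hcoef']
    refine tsum_congr fun k => ?_
    simp only [hbdef]
    rw [← ofReal_norm_eq_coe_nnnorm, ENNReal.ofReal_rpow_of_nonneg (norm_nonneg _) hp0]
  set Btop : ℝ≥0∞ := W^(p-1) * (W * ENNReal.ofReal (∑' n : ℤ, ‖cS S n‖ ^ p)) with hBtop
  have hBtoplt : Btop < ⊤ := by
    refine ENNReal.mul_lt_top (ENNReal.rpow_lt_top_of_nonneg hp1 hWlt.ne) ?_
    exact ENNReal.mul_lt_top hWlt ENNReal.ofReal_lt_top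
  refine ⟨Btop.toReal, fun ξ => ?_⟩
  set α : ℤ → ℝ≥0∞ := fun i => (‖rhoHat (ξ + i)‖₊ : ℝ≥0∞) with hαdef
  have hα : ∑' i, α i ≤ W := rhoHat_tsum_le ξ
  -- pointwise bound
  have hptw : ∀ n : ℤ, (‖𝓕 S (ξ + (n:ℝ))‖₊ : ℝ≥0∞) ≤ ∑' k : ℤ, α (n - k) * b k := by
    intro n
    refine le_trans (enorm_FS_le S hS hsupp (ξ + n)) (le_of_eq ?_)
    have h1 : ∀ k : ℤ, (‖rhoHat (ξ + (n:ℝ) + k)‖₊ : ℝ≥0∞) * (‖cI S k‖₊ : ℝ≥0∞)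
        = α (n + k) * b (-k) := by
      intro k
      rw [cI_eq S hsupp k, hαdef, hbdef]
      congr 3
      push_cast
      ring
    calc ∑' k : ℤ, (‖rhoHat (ξ + (n:ℝ) + k)‖₊ : ℝ≥0∞) * (‖cI S k‖₊ : ℝ≥0∞)
        = ∑' k : ℤ, α (n + k) * b (-k) := tsum_congr h1
      _ = ∑' k : ℤ, α (n - k) * b k := by
          have := (Equiv.neg ℤ).tsum_eq (fun k => α (n - k) * b k)
          rw [← this]
          refine tsum_congr fun k => ?_
          simp [sub_neg_eq_add]
  -- sums of shifted α
  have hshift1 : ∀ n : ℤ, ∑' k : ℤ, α (n - k) ≤ W := by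
    intro n
    have := (Equiv.subLeft n).tsum_eq α
    calc ∑' k : ℤ, α (n - k) = ∑' i, α i := this
      _ ≤ W := hα
  have hshift2 : ∀ k : ℤ, ∑' n : ℤ, α (n - k) ≤ W := by
    intro k
    have := (Equiv.subRight k).tsum_eq α
    calc ∑' n : ℤ, α (n - k) = ∑' i, α i := this
      _ ≤ W := hα
  -- main chain
  have hmain : ∑' n : ℤ, ((‖𝓕 S (ξ + (n:ℝ))‖₊ : ℝ≥0∞))^p ≤ Btop := by
    calc ∑' n : ℤ, ((‖𝓕 S (ξ + (n:ℝ))‖₊ : ℝ≥0∞))^p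
        ≤ ∑' n : ℤ, (∑' k : ℤ, α (n - k) * b k)^p :=
          ENNReal.tsum_le_tsum fun n => ENNReal.rpow_le_rpow (hptw n) hp0
      _ ≤ ∑' n : ℤ, (W^(p-1) * ∑' k : ℤ, α (n - k) * (b k)^p) := by
          refine ENNReal.tsum_le_tsum fun n => ?_
          refine le_trans (jensen (fun k => α (n - k)) b hp) ?_
          exact mul_le_mul' (ENNReal.rpow_le_rpow (hshift1 n) hp1) le_rfl
      _ = W^(p-1) * ∑' n : ℤ, ∑' k : ℤ, α (n - k) * (b k)^p := ENNReal.tsum_mul_left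
      _ = W^(p-1) * ∑' k : ℤ, ∑' n : ℤ, α (n - k) * (b k)^p := by rw [ENNReal.tsum_comm]
      _ ≤ W^(p-1) * (W * ∑' k : ℤ, (b k)^p) := by
          refine mul_le_mul' le_rfl ?_
          calc ∑' k : ℤ, ∑' n : ℤ, α (n - k) * (b k)^p
              = ∑' k : ℤ, (∑' n : ℤ, α (n - k)) * (b k)^p := by
                refine tsum_congr fun k => ?_
                exact ENNReal.tsum_mul_right
            _ ≤ ∑' k : ℤ, W * (b k)^p :=
                ENNReal.tsum_le_tsum fun k => mul_le_mul' (hshift2 k) le_rfl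
            _ = W * ∑' k : ℤ, (b k)^p := ENNReal.tsum_mul_left
      _ = Btop := by rw [hBc, hBtop]
  -- convert to ℝ≥0 and ℝ
  set E : ℤ → ℝ≥0 := fun n => ‖𝓕 S (ξ + (n:ℝ))‖₊ ^ p with hEdef
  have hcoeE : ∀ n : ℤ, ((E n : ℝ≥0) : ℝ≥0∞) = ((‖𝓕 S (ξ + (n:ℝ))‖₊ : ℝ≥0∞))^p := by
    intro n
    rw [hEdef, ENNReal.coe_rpow_of_nonneg _ hp0]
  have hEsum : Summable E := by
    rw [← ENNReal.tsum_coe_ne_top_iff_summable]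
    have : ∑' n : ℤ, ((E n : ℝ≥0) : ℝ≥0∞) ≤ Btop := by
      rw [tsum_congr hcoeE]
      exact hmain
    exact (lt_of_le_of_lt this hBtoplt).ne
  have hre : (fun n : ℤ => ‖𝓕 S (ξ + (n:ℝ))‖ ^ p) = fun n : ℤ => ((E n : ℝ≥0) : ℝ) := by
    funext n
    rw [hEdef, NNReal.coe_rpow, coe_nnnorm]
  constructor
  · rw [hre]
    exact NNReal.summable_coe.mpr hEsum
  · have h1 : (∑' n : ℤ, ‖𝓕 S (ξ + (n:ℝ))‖ ^ p) = ((∑' n, E n : ℝ≥0) : ℝ) := by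
      rw [hre, NNReal.coe_tsum]
    rw [h1]
    have h2 : ((∑' n, E n : ℝ≥0) : ℝ≥0∞) ≤ Btop := by
      rw [ENNReal.coe_tsum hEsum, tsum_congr hcoeE]
      exact hmain
    have h3 := ENNReal.toReal_mono hBtoplt.ne h2
    simpa using h3

end
end
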